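/- arXiv:0907.2062 — 7 statements merged into one kernel-verified Lean document; each statement's English description precedes it below -/
import Mathlib

section
/- Let u : ℝ → ℝ be continuously differentiable with u(x) → 0 as x → +∞, and let k ∈ ℂ with Im k ≥ 0. Suppose f : ℝ → ℂ is twice continuously differentiable and satisfies −f''(x) + u(x)f(x) = k²f(x) on ℝ, that e^{−ikx}f(x) → 1 and e^{−ikx}f'(x) → ik as x → +∞, and that y ↦ u'(y)f(y)² is Lebesgue integrable on [x,∞) for every x ∈ ℝ. Then the squared eigenfunction F = f² is an eigenfunction of the recursion operator L₊ with eigenvalue k²: for every x ∈ ℝ, −(1/4)F''(x) + u(x)F(x) + (1/2)∫_x^{+∞} u'(y)F(y) dy = k² F(x). -/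
open MeasureTheory Filter

/-!
Along a solution of `−f'' + u f = k² f`, the quantity `G = f'² + (k² − u) f²` satisfies
`G' = 2 f' (f'' − (u − k²) f) − u' f² = −u' f²`. The Jost asymptotics make `e^{−2iky} G(y)` tend to
`(ik)² + k² = 0`, and `|e^{2iky}| ≤ 1` for `y ≥ 0` since `Im k ≥ 0`, so `G → 0` and
`∫_x^∞ u' f² = G(x)`. Substituting this and `(f²)'' = 2f'² + 2f f''` into `L₊ f²`, the equation
for `f` leaves exactly `k² f²`.
-/

section SquareDeriv

variable {𝕜 𝔸 : Type*} [NontriviallyNormedField 𝕜] [NormedCommRing 𝔸] [NormedAlgebra 𝕜 𝔸]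

theorem HasDerivAt.fun_sq {f : 𝕜 → 𝔸} {f' : 𝔸} {x : 𝕜} (hf : HasDerivAt f f' x) :
    HasDerivAt (fun y => f y ^ 2) (2 * f x * f') x := by
  simpa using hf.fun_pow 2

theorem deriv_deriv_sq {f : 𝕜 → 𝔸} (hf : Differentiable 𝕜 f) {x : 𝕜}
    (hf' : DifferentiableAt 𝕜 (deriv f) x) :
    deriv (deriv fun y => f y ^ 2) x = 2 * deriv f x ^ 2 + 2 * f x * deriv (deriv f) x := by
  have hderiv : deriv (fun y => f y ^ 2) = fun y => 2 * f y * deriv f y :=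
    funext fun y => (hf y).hasDerivAt.fun_sq.deriv
  rw [hderiv, (((hf x).hasDerivAt.const_mul 2).fun_mul hf'.hasDerivAt).deriv]
  ring

end SquareDeriv

theorem norm_exp_I_mul_mul_ofReal_le_one {k : ℂ} (hk : 0 ≤ k.im) {y : ℝ} (hy : 0 ≤ y) :
    ‖Complex.exp (Complex.I * k * y)‖ ≤ 1 := by
  rw [Complex.norm_exp, Real.exp_le_one_iff]
  simpa [Complex.mul_re] using mul_nonneg hk hy

/-- For constant `u` this is the first integral of `−f'' + u f = k² f`. -/
noncomputable def schrodingerEnergy (u : ℝ → ℝ) (k : ℂ) (f : ℝ → ℂ) (y : ℝ) : ℂ :=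
  deriv f y ^ 2 + (k ^ 2 - u y) * f y ^ 2

theorem hasDerivAt_schrodingerEnergy {u : ℝ → ℝ} {k : ℂ} {f : ℝ → ℂ} {y : ℝ}
    (hu : DifferentiableAt ℝ u y) (hf : DifferentiableAt ℝ f y)
    (hf' : DifferentiableAt ℝ (deriv f) y)
    (heq : -(deriv (deriv f) y) + u y * f y = k ^ 2 * f y) :
    HasDerivAt (schrodingerEnergy u k f) (-((deriv u y : ℝ) * f y ^ 2)) y := by
  have hpot : HasDerivAt (fun t => k ^ 2 - (u t : ℂ)) (0 - ((deriv u y : ℝ) : ℂ)) y :=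
    (hasDerivAt_const y _).sub hu.hasDerivAt.ofReal_comp
  refine (hf'.hasDerivAt.fun_sq.fun_add (hpot.fun_mul hf.hasDerivAt.fun_sq)).congr_deriv ?_
  linear_combination -2 * deriv f y * heq

theorem tendsto_schrodingerEnergy_atTop {u : ℝ → ℝ} (hu0 : Tendsto u atTop (nhds 0))
    {k : ℂ} (hk : 0 ≤ k.im) {f : ℝ → ℂ}
    (hasym : Tendsto (fun x : ℝ => Complex.exp (-Complex.I * k * x) * f x) atTop (nhds 1))
    (hasym' : Tendsto (fun x : ℝ => Complex.exp (-Complex.I * k * x) * deriv f x)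
      atTop (nhds (Complex.I * k))) :
    Tendsto (schrodingerEnergy u k f) atTop (nhds 0) := by
  set E : ℝ → ℂ := fun y => Complex.exp (-Complex.I * k * y)
  have huC : Tendsto (fun y => (u y : ℂ)) atTop (nhds 0) := by
    simpa [Function.comp_def] using (Complex.continuous_ofReal.tendsto 0).comp hu0
  have hscaled : Tendsto (fun y => (E y * deriv f y) ^ 2 + (k ^ 2 - u y) * (E y * f y) ^ 2)
      atTop (nhds 0) := by
    convert (hasym'.pow 2).add (((tendsto_const_nhds (x := k ^ 2)).sub huC).mul (hasym.pow 2))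
      using 2
    linear_combination -k ^ 2 * Complex.I_sq
  have hfactor : ∀ y : ℝ, schrodingerEnergy u k f y = Complex.exp (Complex.I * k * y) ^ 2 *
      ((E y * deriv f y) ^ 2 + (k ^ 2 - u y) * (E y * f y) ^ 2) := by
    intro y
    have hinv : Complex.exp (Complex.I * k * y) * E y = 1 := by
      rw [← Complex.exp_add, ← Complex.exp_zero]
      ring_nf
    have hinv_sq : Complex.exp (Complex.I * k * y) ^ 2 * E y ^ 2 = 1 := by
      rw [← mul_pow, hinv, one_pow]
    unfold schrodingerEnergy
    linear_combination (-(deriv f y ^ 2 + (k ^ 2 - u y) * f y ^ 2)) * hinv_sq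
  have hbounded : IsBoundedUnder (· ≤ ·) atTop
      (norm ∘ fun y : ℝ => Complex.exp (Complex.I * k * y) ^ 2) :=
    isBoundedUnder_of_eventually_le (a := 1) <| (eventually_ge_atTop 0).mono fun y hy => by
      simpa [norm_pow] using norm_exp_I_mul_mul_ofReal_le_one hk hy
  rw [funext hfactor]
  exact isBoundedUnder_le_mul_tendsto_zero hbounded hscaled

theorem integral_Ici_eq_of_hasDerivAt_of_tendsto_zero {E : Type*} [NormedAddCommGroup E]
    [NormedSpace ℝ E] [CompleteSpace E] {G g : ℝ → E} {x : ℝ}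
    (hderiv : ∀ y ∈ Set.Ici x, HasDerivAt G (-g y) y) (hint : IntegrableOn g (Set.Ici x))
    (hG : Tendsto G atTop (nhds 0)) :
    ∫ y in Set.Ici x, g y = G x := by
  have h := integral_Ioi_of_hasDerivAt_of_tendsto' hderiv
    (hint.mono_set Set.Ioi_subset_Ici_self).neg hG
  rw [integral_neg, zero_sub, neg_inj] at h
  rw [integral_Ici_eq_integral_Ioi, h]

/-- If `u` is `C¹` with `u → 0` at `+∞`, `Im k ≥ 0`, and `f` is a `C²`
solution of `−f'' + u f = k² f` with the Jost-type asymptotics `e^{−ikx} f → 1` and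
`e^{−ikx} f' → ik` at `+∞`, and `u' f²` is integrable on `[x,∞)` for each `x`, then the
squared eigenfunction `F = f²` satisfies `L₊F = k²F`, i.e.
`−(1/4)F'' + uF + (1/2)∫_x^∞ u'F = k²F`. -/
theorem squared_eigenfunction_recursion_operator
    (u : ℝ → ℝ) (hu : ContDiff ℝ 1 u) (hu0 : Tendsto u atTop (nhds 0))
    (k : ℂ) (hk : 0 ≤ k.im)
    (f : ℝ → ℂ) (hf : ContDiff ℝ 2 f)
    (heq : ∀ x : ℝ, -(deriv (deriv f) x) + ((u x : ℝ) : ℂ) * f x = k ^ 2 * f x)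
    (hasym : Tendsto (fun x : ℝ => Complex.exp (-Complex.I * k * (x : ℂ)) * f x) atTop (nhds 1))
    (hasym' : Tendsto (fun x : ℝ => Complex.exp (-Complex.I * k * (x : ℂ)) * deriv f x)
      atTop (nhds (Complex.I * k)))
    (hint : ∀ x : ℝ, IntegrableOn (fun y : ℝ => ((deriv u y : ℝ) : ℂ) * (f y) ^ 2) (Set.Ici x)) :
    ∀ x : ℝ,
      -(1 / 4 : ℂ) * deriv (deriv (fun y : ℝ => (f y) ^ 2)) x
        + ((u x : ℝ) : ℂ) * (f x) ^ 2
        + (1 / 2 : ℂ) * ∫ y in Set.Ici x, ((deriv u y : ℝ) : ℂ) * (f y) ^ 2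
      = k ^ 2 * (f x) ^ 2 := by
  intro x
  have hfd : Differentiable ℝ f := hf.differentiable (by norm_num)
  have hfd' : Differentiable ℝ (deriv f) := hf.differentiable_deriv_two
  have hud : Differentiable ℝ u := hu.differentiable one_ne_zero
  have hintegral : ∫ y in Set.Ici x, ((deriv u y : ℝ) : ℂ) * f y ^ 2 =
      schrodingerEnergy u k f x :=
    integral_Ici_eq_of_hasDerivAt_of_tendsto_zero
      (fun y _ => hasDerivAt_schrodingerEnergy (hud y) (hfd y) (hfd' y) (heq y)) (hint x)
      (tendsto_schrodingerEnergy_atTop hu0 hk hasym hasym')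
  rw [deriv_deriv_sq hfd (hfd' x), hintegral, schrodingerEnergy]
  linear_combination (f x / 2) * heq x
end

section
/- Let u : ℝ × ℝ → ℝ be smooth, suppose u and all its partial derivatives decay rapidly in x (faster than any power of 1/|x|) locally uniformly in t, and suppose u satisfies the KdV equation u_t − 6uu_x + u_{xxx} = 0. Then the function t ↦ ∫_ℝ u(x,t)² dx is constant. -/
open MeasureTheory
open Filter

lemma integrable_of_quad_bound {f : ℝ → ℝ} (hc : Continuous f) {K : ℝ}
    (h : ∀ x, |f x| ≤ K * (1 + x ^ 2)⁻¹) : Integrable f := by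
  refine (integrable_inv_one_add_sq.const_mul K).mono' hc.aestronglyMeasurable ?_
  exact Filter.Eventually.of_forall fun x => by simpa [Real.norm_eq_abs] using h x

lemma tendsto_zero_of_linear_decay {g : ℝ → ℝ} {K : ℝ}
    (h : ∀ x, (1 + |x|) * |g x| ≤ K) :
    Tendsto g atTop (nhds 0) ∧ Tendsto g atBot (nhds 0) := by
  have hb : ∀ x, |g x| ≤ K * (1 + |x|)⁻¹ := by
    intro x
    have hx : (0:ℝ) < 1 + |x| := by positivity
    have hx' := h x
    rw [mul_comm, ← le_div_iff₀ hx] at hx'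
    simpa [div_eq_mul_inv] using hx'
  have h1 : Tendsto (fun x : ℝ => K * (1 + |x|)⁻¹) atTop (nhds 0) := by
    have : Tendsto (fun x : ℝ => 1 + |x|) atTop atTop :=
      tendsto_atTop_add_const_left _ 1 tendsto_abs_atTop_atTop
    simpa using (this.inv_tendsto_atTop).const_mul K
  have h2 : Tendsto (fun x : ℝ => K * (1 + |x|)⁻¹) atBot (nhds 0) := by
    have : Tendsto (fun x : ℝ => 1 + |x|) atBot atTop :=
      tendsto_atTop_add_const_left _ 1 tendsto_abs_atBot_atTop
    simpa using (this.inv_tendsto_atTop).const_mul K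
  exact ⟨squeeze_zero_norm (fun x => by simpa [Real.norm_eq_abs] using hb x) h1,
    squeeze_zero_norm (fun x => by simpa [Real.norm_eq_abs] using hb x) h2⟩

lemma integral_deriv_eq_zero_of_decay {G g : ℝ → ℝ}
    (hG : ∀ x, HasDerivAt G (g x) x) (hgc : Continuous g) (hgi : Integrable g)
    (ht : Tendsto G atTop (nhds 0)) (hb : Tendsto G atBot (nhds 0)) :
    ∫ x : ℝ, g x = 0 := by
  have h1 : ∀ R : ℝ, ∫ x in (-R)..R, g x = G R - G (-R) := fun R =>
    intervalIntegral.integral_eq_sub_of_hasDerivAt (fun x _ => hG x)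
      (hgc.intervalIntegrable _ _)
  have h2 : Tendsto (fun R : ℝ => ∫ x in (-R)..R, g x) atTop (nhds (∫ x : ℝ, g x)) :=
    intervalIntegral_tendsto_integral hgi tendsto_neg_atTop_atBot tendsto_id
  have h3 : Tendsto (fun R : ℝ => G R - G (-R)) atTop (nhds 0) := by
    simpa using ht.sub (hb.comp tendsto_neg_atTop_atBot)
  have h4 : Tendsto (fun R : ℝ => G R - G (-R)) atTop (nhds (∫ x : ℝ, g x)) := by
    simpa only [h1] using h2
  exact tendsto_nhds_unique h4 h3



/-- `u` and all its partial derivatives decay rapidly in `x` (faster than any power of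
`1/|x|`), locally uniformly in `t`. Here `u x t` has space variable `x` and time `t`. -/
def RapidlyDecayingInX (u : ℝ → ℝ → ℝ) : Prop :=
  ∀ i j n : ℕ, ∀ a b : ℝ, ∃ C : ℝ, ∀ t ∈ Set.Icc a b, ∀ x : ℝ,
    |x| ^ n * |iteratedDeriv i (fun x' => iteratedDeriv j (u x') t) x| ≤ C

/-- For a smooth, rapidly decaying solution of the KdV equation
`u_t − 6uu_x + u_{xxx} = 0`, the momentum `t ↦ ∫_ℝ u(x,t)² dx` is constant. -/
theorem kdv_second_integral (u : ℝ → ℝ → ℝ)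
    (hsmooth : ContDiff ℝ (⊤ : ℕ∞) (Function.uncurry u))
    (hdecay : RapidlyDecayingInX u)
    (hkdv : ∀ x t : ℝ,
      deriv (fun t' => u x t') t
        - 6 * u x t * deriv (fun x' => u x' t) x
        + deriv (deriv (deriv (fun x' => u x' t))) x = 0) :
    ∀ t₁ t₂ : ℝ, ∫ x : ℝ, (u x t₁) ^ 2 = ∫ x : ℝ, (u x t₂) ^ 2 := by
  -- basic smoothness facts
  have hx_smooth : ∀ t : ℝ, ContDiff ℝ (⊤ : ℕ∞) (fun x => u x t) := fun t =>
    hsmooth.comp (contDiff_id.prodMk contDiff_const)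
  have ht_smooth : ∀ x : ℝ, ContDiff ℝ (⊤ : ℕ∞) (u x) := fun x =>
    hsmooth.comp (contDiff_const.prodMk contDiff_id)
  have hcont : Continuous (Function.uncurry u) := hsmooth.continuous
  -- joint continuity of the time derivative
  have hut_cont : Continuous (fun p : ℝ × ℝ => deriv (u p.1) p.2) := by
    have h0 : ContDiff ℝ (⊤ : ℕ∞) (Function.uncurry (fun (p : ℝ × ℝ) => u p.1)) := by
      exact hsmooth.comp ((contDiff_fst.comp contDiff_fst).prodMk contDiff_snd)
    have h1 : ContDiff ℝ 0 (fun p : ℝ × ℝ => fderiv ℝ (u p.1) p.2 (1 : ℝ)) :=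
      ContDiff.fderiv_apply h0 contDiff_snd contDiff_const (by simp)
    have h2 := contDiff_zero.mp h1
    simpa only [fderiv_apply_one_eq_deriv] using h2
  -- decay extraction helpers
  have decay0 : ∀ (n : ℕ) (a b : ℝ), ∃ C : ℝ, ∀ t ∈ Set.Icc a b, ∀ x : ℝ,
      |x| ^ n * |u x t| ≤ C := by
    intro n a b
    obtain ⟨C, hC⟩ := hdecay 0 0 n a b
    exact ⟨C, fun t ht x => by simpa [iteratedDeriv_zero] using hC t ht x⟩
  have decay1 : ∀ (n : ℕ) (a b : ℝ), ∃ C : ℝ, ∀ t ∈ Set.Icc a b, ∀ x : ℝ,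
      |x| ^ n * |deriv (fun x' => u x' t) x| ≤ C := by
    intro n a b
    obtain ⟨C, hC⟩ := hdecay 1 0 n a b
    exact ⟨C, fun t ht x => by
      simpa [iteratedDeriv_one, iteratedDeriv_zero] using hC t ht x⟩
  have decay2 : ∀ (n : ℕ) (a b : ℝ), ∃ C : ℝ, ∀ t ∈ Set.Icc a b, ∀ x : ℝ,
      |x| ^ n * |deriv (deriv (fun x' => u x' t)) x| ≤ C := by
    intro n a b
    obtain ⟨C, hC⟩ := hdecay 2 0 n a b
    exact ⟨C, fun t ht x => by
      simpa [iteratedDeriv_succ, iteratedDeriv_one, iteratedDeriv_zero] using hC t ht x⟩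
  have decayt : ∀ (n : ℕ) (a b : ℝ), ∃ C : ℝ, ∀ t ∈ Set.Icc a b, ∀ x : ℝ,
      |x| ^ n * |deriv (u x) t| ≤ C := by
    intro n a b
    obtain ⟨C, hC⟩ := hdecay 0 1 n a b
    exact ⟨C, fun t ht x => by
      simpa [iteratedDeriv_one, iteratedDeriv_zero] using hC t ht x⟩
  -- helper for quadratic decay bounds
  have le_quad_inv : ∀ {A K x : ℝ}, (1 + x ^ 2) * A ≤ K → A ≤ K * (1 + x ^ 2)⁻¹ := by
    intro A K x h
    have hx : (0:ℝ) < 1 + x ^ 2 := by positivity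
    calc A = ((1 + x ^ 2) * A) * (1 + x ^ 2)⁻¹ := by field_simp
      _ ≤ K * (1 + x ^ 2)⁻¹ := mul_le_mul_of_nonneg_right h (by positivity)
  suffices hd : ∀ t₀ : ℝ, HasDerivAt (fun t => ∫ x : ℝ, (u x t) ^ 2) 0 t₀ by
    intro t₁ t₂
    exact is_const_of_deriv_eq_zero (fun t => (hd t).differentiableAt)
      (fun t => (hd t).deriv) t₁ t₂
  intro t₀
  have ht₀ : t₀ ∈ Set.Icc (t₀ - 1) (t₀ + 1) := by constructor <;> linarith
  obtain ⟨C0, hC0'⟩ := decay0 0 (t₀ - 1) (t₀ + 1)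
  obtain ⟨C2, hC2'⟩ := decay0 2 (t₀ - 1) (t₀ + 1)
  obtain ⟨D0, hD0'⟩ := decayt 0 (t₀ - 1) (t₀ + 1)
  have hu0 : ∀ t ∈ Set.Icc (t₀ - 1) (t₀ + 1), ∀ x : ℝ, |u x t| ≤ C0 :=
    fun t ht x => by simpa using hC0' t ht x
  have hu2 : ∀ t ∈ Set.Icc (t₀ - 1) (t₀ + 1), ∀ x : ℝ, x ^ 2 * |u x t| ≤ C2 :=
    fun t ht x => by simpa [sq_abs] using hC2' t ht x
  have hut0 : ∀ t ∈ Set.Icc (t₀ - 1) (t₀ + 1), ∀ x : ℝ, |deriv (u x) t| ≤ D0 :=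
    fun t ht x => by simpa using hD0' t ht x
  have hC0n : 0 ≤ C0 := le_trans (abs_nonneg _) (hu0 t₀ ht₀ 0)
  have hC2n : 0 ≤ C2 := le_trans (by positivity) (hu2 t₀ ht₀ 0)
  have hD0n : 0 ≤ D0 := le_trans (abs_nonneg _) (hut0 t₀ ht₀ 0)
  -- continuity facts at time t₀
  have hcu : Continuous fun x => u x t₀ := hcont.comp (continuous_id.prodMk continuous_const)
  have hcut : Continuous fun x => deriv (u x) t₀ :=
    hut_cont.comp (continuous_id.prodMk continuous_const)
  have hF'cont : Continuous fun x => 2 * u x t₀ * deriv (u x) t₀ :=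
    (continuous_const.mul hcu).mul hcut
  -- differentiation under the integral sign
  have hball : ∀ t ∈ Metric.ball t₀ 1, t ∈ Set.Icc (t₀ - 1) (t₀ + 1) := by
    intro t ht
    rw [Metric.mem_ball, Real.dist_eq] at ht
    have := abs_lt.mp ht
    constructor <;> linarith [this.1, this.2]
  have h_bound : ∀ x : ℝ, ∀ t ∈ Metric.ball t₀ 1,
      ‖2 * u x t * deriv (u x) t‖ ≤ (2 * C0 * D0 + 2 * C2 * D0) * (1 + x ^ 2)⁻¹ := by
    intro x t ht'
    have ht := hball t ht'
    have h1 := hu0 t ht x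
    have h2 := hu2 t ht x
    have h3 := hut0 t ht x
    rw [Real.norm_eq_abs]
    refine le_quad_inv ?_
    have e : |2 * u x t * deriv (u x) t| = 2 * |u x t| * |deriv (u x) t| := by
      rw [abs_mul, abs_mul]
      norm_num
    rw [e]
    nlinarith [abs_nonneg (u x t), abs_nonneg (deriv (u x) t), sq_nonneg x,
      mul_le_mul h1 h3 (abs_nonneg _) hC0n, mul_le_mul h2 h3 (abs_nonneg _) hC2n]
  have hF_meas : ∀ᶠ t in nhds t₀, AEStronglyMeasurable (fun x => (u x t) ^ 2)
      (volume : Measure ℝ) := by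
    refine Filter.Eventually.of_forall fun t => ?_
    exact ((hcont.comp (continuous_id.prodMk continuous_const)).pow 2).aestronglyMeasurable
  have hF_int : Integrable (fun x => (u x t₀) ^ 2) := by
    refine integrable_of_quad_bound (K := C0 * C0 + C2 * C0) (hcu.pow 2) fun x => ?_
    refine le_quad_inv ?_
    have h1 := hu0 t₀ ht₀ x
    have h2 := hu2 t₀ ht₀ x
    have e : |(u x t₀) ^ 2| = |u x t₀| * |u x t₀| := by
      rw [abs_pow]; ring
    rw [e]
    nlinarith [abs_nonneg (u x t₀), sq_nonneg x]
  have h_diff : ∀ x : ℝ, ∀ t ∈ Metric.ball t₀ 1,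
      HasDerivAt (fun t' => (u x t') ^ 2) (2 * u x t * deriv (u x) t) t := by
    intro x t _
    have := (((ht_smooth x).differentiable (by simp)) t).hasDerivAt.fun_pow 2
    simpa using this
  obtain ⟨hF'int, hFd⟩ := hasDerivAt_integral_of_dominated_loc_of_deriv_le
    (μ := (volume : Measure ℝ)) (F := fun t x => (u x t) ^ 2)
    (F' := fun t x => 2 * u x t * deriv (u x) t)
    (bound := fun x => (2 * C0 * D0 + 2 * C2 * D0) * (1 + x ^ 2)⁻¹)
    (Metric.ball_mem_nhds t₀ one_pos) hF_meas hF_int hF'cont.aestronglyMeasurable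
    (Filter.Eventually.of_forall h_bound)
    ((integrable_inv_one_add_sq.const_mul _))
    (Filter.Eventually.of_forall h_diff)
  -- the integral of F' t₀ vanishes
  have h0 : ContDiff ℝ (⊤ : ℕ∞) (fun x => u x t₀) := (hx_smooth t₀).of_le (by simp)
  have h1 := contDiff_infty_iff_deriv.mp h0
  have h2 := contDiff_infty_iff_deriv.mp h1.2
  have h3 := contDiff_infty_iff_deriv.mp h2.2
  set G : ℝ → ℝ := fun x => 4 * (u x t₀) ^ 3
      - 2 * u x t₀ * deriv (deriv (fun x' => u x' t₀)) x
      + (deriv (fun x' => u x' t₀) x) ^ 2 with hGdef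
  have hG : ∀ x : ℝ, HasDerivAt G (2 * u x t₀ * deriv (u x) t₀) x := by
    intro x
    have hd1 : HasDerivAt (fun x' => u x' t₀) (deriv (fun x' => u x' t₀) x) x :=
      (h1.1 x).hasDerivAt
    have hd2 : HasDerivAt (deriv (fun x' => u x' t₀))
        (deriv (deriv (fun x' => u x' t₀)) x) x := (h2.1 x).hasDerivAt
    have hd3 : HasDerivAt (deriv (deriv (fun x' => u x' t₀)))
        (deriv (deriv (deriv (fun x' => u x' t₀))) x) x := (h3.1 x).hasDerivAt
    have hA := (hd1.fun_pow 3).const_mul (4 : ℝ)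
    have hB := (hd1.const_mul (2 : ℝ)).fun_mul hd3
    have hC := hd2.fun_pow 2
    have hsum := (hA.fun_sub hB).fun_add hC
    refine hsum.congr_deriv ?_
    have hk := hkdv x t₀
    have hut : deriv (u x) t₀ = 6 * u x t₀ * deriv (fun x' => u x' t₀) x
        - deriv (deriv (deriv (fun x' => u x' t₀))) x := by
      have : deriv (fun t' => u x t') t₀ = deriv (u x) t₀ := rfl
      rw [this] at hk
      linarith
    rw [hut]
    push_cast
    ring
  -- linear decay of G
  obtain ⟨B01, hB01'⟩ := decay0 1 (t₀ - 1) (t₀ + 1)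
  obtain ⟨B10, hB10'⟩ := decay1 0 (t₀ - 1) (t₀ + 1)
  obtain ⟨B11, hB11'⟩ := decay1 1 (t₀ - 1) (t₀ + 1)
  obtain ⟨B20, hB20'⟩ := decay2 0 (t₀ - 1) (t₀ + 1)
  have hu1 : ∀ x : ℝ, |x| * |u x t₀| ≤ B01 := fun x => by
    simpa using hB01' t₀ ht₀ x
  have hf10 : ∀ x : ℝ, |deriv (fun x' => u x' t₀) x| ≤ B10 := fun x => by
    simpa using hB10' t₀ ht₀ x
  have hf11 : ∀ x : ℝ, |x| * |deriv (fun x' => u x' t₀) x| ≤ B11 := fun x => by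
    simpa using hB11' t₀ ht₀ x
  have hf20 : ∀ x : ℝ, |deriv (deriv (fun x' => u x' t₀)) x| ≤ B20 := fun x => by
    simpa using hB20' t₀ ht₀ x
  have hB01n : 0 ≤ B01 := le_trans (by positivity) (hu1 0)
  have hB10n : 0 ≤ B10 := le_trans (abs_nonneg _) (hf10 0)
  have hB11n : 0 ≤ B11 := le_trans (by positivity) (hf11 0)
  have hB20n : 0 ≤ B20 := le_trans (abs_nonneg _) (hf20 0)
  have hGlin : ∀ x : ℝ, (1 + |x|) * |G x| ≤
      4 * C0 ^ 3 + 2 * (C0 * B20) + B10 ^ 2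
        + 4 * (B01 * C0 ^ 2) + 2 * (B01 * B20) + B11 * B10 := by
    intro x
    have hU := hu0 t₀ ht₀ x
    have hU1 := hu1 x
    have hF1 := hf10 x
    have hF11 := hf11 x
    have hF2 := hf20 x
    have habs : |G x| ≤ 4 * |u x t₀| ^ 3
        + 2 * (|u x t₀| * |deriv (deriv (fun x' => u x' t₀)) x|)
        + |deriv (fun x' => u x' t₀) x| ^ 2 := by
      have e : G x = 4 * (u x t₀) ^ 3
          + -(2 * u x t₀ * deriv (deriv (fun x' => u x' t₀)) x)
          + (deriv (fun x' => u x' t₀) x) ^ 2 := by rw [hGdef]; ring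
      rw [e]
      have h := abs_add_three (4 * (u x t₀) ^ 3)
        (-(2 * u x t₀ * deriv (deriv (fun x' => u x' t₀)) x))
        ((deriv (fun x' => u x' t₀) x) ^ 2)
      simp only [abs_neg, abs_mul, abs_pow] at h
      norm_num at h
      nlinarith [h, sq_abs (deriv (fun x' => u x' t₀) x)]
    have p1 : |u x t₀| ^ 3 ≤ C0 ^ 3 := pow_le_pow_left₀ (abs_nonneg _) hU 3
    have p2 : |u x t₀| * |deriv (deriv (fun x' => u x' t₀)) x| ≤ C0 * B20 :=
      mul_le_mul hU hF2 (abs_nonneg _) hC0n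
    have p3 : |deriv (fun x' => u x' t₀) x| ^ 2 ≤ B10 ^ 2 :=
      pow_le_pow_left₀ (abs_nonneg _) hF1 2
    have p4 : (|x| * |u x t₀|) * |u x t₀| ^ 2 ≤ B01 * C0 ^ 2 :=
      mul_le_mul hU1 (pow_le_pow_left₀ (abs_nonneg _) hU 2) (by positivity) hB01n
    have p5 : (|x| * |u x t₀|) * |deriv (deriv (fun x' => u x' t₀)) x| ≤ B01 * B20 :=
      mul_le_mul hU1 hF2 (abs_nonneg _) hB01n
    have p6 : (|x| * |deriv (fun x' => u x' t₀) x|) * |deriv (fun x' => u x' t₀) x|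
        ≤ B11 * B10 := mul_le_mul hF11 hF1 (abs_nonneg _) hB11n
    have hxg := mul_le_mul_of_nonneg_left habs (abs_nonneg x)
    nlinarith [habs, hxg, p1, p2, p3, p4, p5, p6, abs_nonneg x, abs_nonneg (G x)]
  obtain ⟨htop, hbot⟩ := tendsto_zero_of_linear_decay hGlin
  have hzero : ∫ x : ℝ, 2 * u x t₀ * deriv (u x) t₀ = 0 :=
    integral_deriv_eq_zero_of_decay hG hF'cont hF'int htop hbot
  rw [hzero] at hFd
  exact hFd
end

section
/- Let u : ℝ × ℝ → ℝ be smooth, suppose u and all its partial derivatives decay rapidly in x (faster than any power of 1/|x|) locally uniformly in t, and suppose u satisfies the KdV equation u_t − 6uu_x + u_{xxx} = 0. Then the function t ↦ ∫_ℝ ( u_{xx}(x,t)² − 5u(x,t)²u_{xx}(x,t) + 5u(x,t)⁴ ) dx is constant. -/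
open MeasureTheory

set_option maxHeartbeats 1000000


noncomputable def Px (W : ℝ × ℝ → ℝ) : ℝ × ℝ → ℝ := fun p => fderiv ℝ W p (1, 0)
noncomputable def Pt (W : ℝ × ℝ → ℝ) : ℝ × ℝ → ℝ := fun p => fderiv ℝ W p (0, 1)

lemma hasDerivAt_sectX {W : ℝ × ℝ → ℝ} {p : ℝ × ℝ} (hW : DifferentiableAt ℝ W p) :
    HasDerivAt (fun x' => W (x', p.2)) (Px W p) p.1 := by
  have h1 : HasDerivAt (fun x' : ℝ => ((x', p.2) : ℝ × ℝ)) ((1:ℝ), (0:ℝ)) p.1 :=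
    (hasDerivAt_id p.1).prodMk (hasDerivAt_const p.1 p.2)
  have h2 : HasFDerivAt W (fderiv ℝ W p) (p.1, p.2) := by simpa using hW.hasFDerivAt
  exact h2.comp_hasDerivAt p.1 h1

lemma hasDerivAt_sectT {W : ℝ × ℝ → ℝ} {p : ℝ × ℝ} (hW : DifferentiableAt ℝ W p) :
    HasDerivAt (fun t' => W (p.1, t')) (Pt W p) p.2 := by
  have h1 : HasDerivAt (fun t' : ℝ => ((p.1, t') : ℝ × ℝ)) ((0:ℝ), (1:ℝ)) p.2 :=
    (hasDerivAt_const p.2 p.1).prodMk (hasDerivAt_id p.2)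
  have h2 : HasFDerivAt W (fderiv ℝ W p) (p.1, p.2) := by simpa using hW.hasFDerivAt
  exact h2.comp_hasDerivAt p.2 h1

lemma Px_contDiff {W : ℝ × ℝ → ℝ} (hW : ContDiff ℝ (⊤ : ℕ∞) W) : ContDiff ℝ (⊤ : ℕ∞) (Px W) :=
  (hW.fderiv_right (by simp)).clm_apply contDiff_const

lemma Pt_contDiff {W : ℝ × ℝ → ℝ} (hW : ContDiff ℝ (⊤ : ℕ∞) W) : ContDiff ℝ (⊤ : ℕ∞) (Pt W) :=
  (hW.fderiv_right (by simp)).clm_apply contDiff_const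

lemma Pt_Px_comm {W : ℝ × ℝ → ℝ} (hW : ContDiff ℝ (⊤ : ℕ∞) W) (p : ℝ × ℝ) :
    Pt (Px W) p = Px (Pt W) p := by
  have hW1 : ContDiff ℝ (⊤ : ℕ∞) (fderiv ℝ W) := hW.fderiv_right (by simp)
  have hd : DifferentiableAt ℝ (fderiv ℝ W) p :=
    (hW1.differentiable (by simp)).differentiableAt
  have hsym : IsSymmSndFDerivAt ℝ W p :=
    hW.contDiffAt.isSymmSndFDerivAt (by rw [minSmoothness_of_isRCLikeNormedField]; exact WithTop.coe_le_coe.mpr (le_top : (2:ℕ∞) ≤ ⊤))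
  have e1 : Pt (Px W) p = fderiv ℝ (fderiv ℝ W) p (0,1) (1,0) := by
    show fderiv ℝ (fun q => fderiv ℝ W q (1,0)) p (0,1) = _
    rw [fderiv_clm_apply hd (differentiableAt_const _)]
    simp
  have e2 : Px (Pt W) p = fderiv ℝ (fderiv ℝ W) p (1,0) (0,1) := by
    show fderiv ℝ (fun q => fderiv ℝ W q (0,1)) p (1,0) = _
    rw [fderiv_clm_apply hd (differentiableAt_const _)]
    simp
  rw [e1, e2]
  exact hsym _ _

lemma iter_contDiff {W : ℝ × ℝ → ℝ} (hW : ContDiff ℝ (⊤ : ℕ∞) W) (n : ℕ) :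
    ContDiff ℝ (⊤ : ℕ∞) (Px^[n] W) := by
  induction n with
  | zero => simpa using hW
  | succ n ih => rw [Function.iterate_succ_apply']; exact Px_contDiff ih

lemma iter_eq_iteratedDeriv {W : ℝ × ℝ → ℝ} (hW : ContDiff ℝ (⊤ : ℕ∞) W) (n : ℕ) (t : ℝ) :
    ∀ x, iteratedDeriv n (fun x' => W (x', t)) x = Px^[n] W (x, t) := by
  induction n with
  | zero => intro x; simp
  | succ n ih =>
    intro x
    rw [iteratedDeriv_succ, funext ih, Function.iterate_succ_apply']
    exact (hasDerivAt_sectX (p := (x,t)) ((iter_contDiff hW n).differentiable (by simp)).differentiableAt).deriv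

lemma Pt_iter {W : ℝ × ℝ → ℝ} (hW : ContDiff ℝ (⊤ : ℕ∞) W) (n : ℕ) :
    Pt (Px^[n] W) = Px^[n] (Pt W) := by
  induction n with
  | zero => simp
  | succ n ih =>
    rw [Function.iterate_succ_apply', Function.iterate_succ_apply', ← ih]
    exact funext (Pt_Px_comm (iter_contDiff hW n))

noncomputable def vv (u : ℝ → ℝ → ℝ) (n : ℕ) (x t : ℝ) : ℝ := Px^[n] (Function.uncurry u) (x, t)

section
variable {u : ℝ → ℝ → ℝ}

lemma vv_zero (x t : ℝ) : vv u 0 x t = u x t := rfl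

lemma vv_x (hs : ContDiff ℝ (⊤ : ℕ∞) (Function.uncurry u)) (n : ℕ) (x t : ℝ) :
    HasDerivAt (fun x' => vv u n x' t) (vv u (n+1) x t) x := by
  have h := hasDerivAt_sectX (p := (x,t))
    ((iter_contDiff hs n).differentiable (by simp)).differentiableAt
  have e : vv u (n+1) x t = Px (Px^[n] (Function.uncurry u)) (x, t) := by
    rw [vv, Function.iterate_succ_apply']
  rw [e]; exact h

lemma vv_t (hs : ContDiff ℝ (⊤ : ℕ∞) (Function.uncurry u)) (n : ℕ) (x t : ℝ) :
    HasDerivAt (fun t' => vv u n x t') (Px^[n] (Pt (Function.uncurry u)) (x, t)) t := by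
  have h := hasDerivAt_sectT (p := (x,t))
    ((iter_contDiff hs n).differentiable (by simp)).differentiableAt
  rw [← Pt_iter hs]; exact h

lemma vv_cont (hs : ContDiff ℝ (⊤ : ℕ∞) (Function.uncurry u)) (n : ℕ) (t : ℝ) : Continuous (fun x => vv u n x t) := by
  have : Continuous (Px^[n] (Function.uncurry u)) := (iter_contDiff hs n).continuous
  exact this.comp (continuous_id.prodMk continuous_const)

variable (hs : ContDiff ℝ (⊤ : ℕ∞) (Function.uncurry u))
  (hkdv : ∀ x t : ℝ,
      deriv (fun t' => u x t') t
        - 6 * u x t * deriv (fun x' => u x' t) x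
        + deriv (deriv (deriv (fun x' => u x' t))) x = 0)
include hs hkdv

lemma PtW_eq : ∀ x t, Pt (Function.uncurry u) (x,t)
    = 6 * vv u 0 x t * vv u 1 x t - vv u 3 x t := by
  intro x t
  have d1 : deriv (fun x' => u x' t) = fun y => vv u 1 y t :=
    funext fun y => (vv_x hs 0 y t).deriv
  have d2 : deriv (fun y => vv u 1 y t) = fun y => vv u 2 y t :=
    funext fun y => (vv_x hs 1 y t).deriv
  have d3 : deriv (fun y => vv u 2 y t) x = vv u 3 x t := (vv_x hs 2 x t).deriv
  have ht : deriv (fun t' => u x t') t = Pt (Function.uncurry u) (x,t) :=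
    (hasDerivAt_sectT (p := (x,t)) (hs.differentiable (by simp)).differentiableAt).deriv
  have hk := hkdv x t
  rw [ht, d1, d2, d3] at hk
  have h1 : deriv (fun x' => u x' t) x = vv u 1 x t := by rw [d1]
  rw [vv_zero]
  linarith [hk]

lemma vv_t0 (x t : ℝ) : HasDerivAt (fun t' => vv u 0 x t')
    (6 * vv u 0 x t * vv u 1 x t - vv u 3 x t) t := by
  have h := vv_t hs 0 x t
  rwa [Function.iterate_zero_apply, PtW_eq hs hkdv] at h

lemma vv_t2 (x t : ℝ) : HasDerivAt (fun t' => vv u 2 x t')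
    (18 * vv u 1 x t * vv u 2 x t + 6 * vv u 0 x t * vv u 3 x t - vv u 5 x t) t := by
  have h := vv_t hs 2 x t
  have hPt : ContDiff ℝ (⊤ : ℕ∞) (Pt (Function.uncurry u)) := Pt_contDiff hs
  have e1 : Px^[2] (Pt (Function.uncurry u)) (x, t)
      = iteratedDeriv 2 (fun x' => Pt (Function.uncurry u) (x', t)) x :=
    (iter_eq_iteratedDeriv hPt 2 t x).symm
  have e2 : (fun x' => Pt (Function.uncurry u) (x', t))
      = fun x' => 6 * vv u 0 x' t * vv u 1 x' t - vv u 3 x' t :=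
    funext fun x' => PtW_eq hs hkdv x' t
  have gd : ∀ y, HasDerivAt (fun x' => 6 * vv u 0 x' t * vv u 1 x' t - vv u 3 x' t)
      (6 * vv u 1 y t * vv u 1 y t + 6 * vv u 0 y t * vv u 2 y t - vv u 4 y t) y := by
    intro y
    have := (((vv_x hs 0 y t).const_mul (6:ℝ)).mul (vv_x hs 1 y t)).sub (vv_x hs 3 y t)
    exact this.congr_deriv (by simp only [Nat.reduceAdd])
  have gd2 : HasDerivAt (fun y => 6 * vv u 1 y t * vv u 1 y t
        + 6 * vv u 0 y t * vv u 2 y t - vv u 4 y t)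
      (18 * vv u 1 x t * vv u 2 x t + 6 * vv u 0 x t * vv u 3 x t - vv u 5 x t) x := by
    have := ((((vv_x hs 1 x t).const_mul (6:ℝ)).mul (vv_x hs 1 x t)).add
      (((vv_x hs 0 x t).const_mul (6:ℝ)).mul (vv_x hs 2 x t))).sub (vv_x hs 4 x t)
    exact this.congr_deriv (by simp only [Nat.reduceAdd]; ring)
  have e3 : Px^[2] (Pt (Function.uncurry u)) (x, t)
      = 18 * vv u 1 x t * vv u 2 x t + 6 * vv u 0 x t * vv u 3 x t - vv u 5 x t := by
    rw [e1, iteratedDeriv_succ, iteratedDeriv_one, e2, funext fun y => (gd y).deriv]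
    exact gd2.deriv
  rwa [e3] at h
end


noncomputable def Ff (u : ℝ → ℝ → ℝ) (x t : ℝ) : ℝ :=
  vv u 2 x t ^ 2 - 5 * vv u 0 x t ^ 2 * vv u 2 x t + 5 * vv u 0 x t ^ 4

noncomputable def Tt (u : ℝ → ℝ → ℝ) (x t : ℝ) : ℝ :=
  36 * vv u 1 x t * vv u 2 x t ^ 2 - 150 * vv u 0 x t ^ 2 * vv u 1 x t * vv u 2 x t
  + 22 * vv u 0 x t * vv u 2 x t * vv u 3 x t - 50 * vv u 0 x t ^ 3 * vv u 3 x t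
  - 2 * vv u 2 x t * vv u 5 x t + 5 * vv u 0 x t ^ 2 * vv u 5 x t
  + 120 * vv u 0 x t ^ 4 * vv u 1 x t

noncomputable def Gg (u : ℝ → ℝ → ℝ) (x t : ℝ) : ℝ :=
  vv u 3 x t ^ 2 - 2 * vv u 2 x t * vv u 4 x t + 10 * vv u 1 x t ^ 2 * vv u 2 x t
  + 16 * vv u 0 x t * vv u 2 x t ^ 2 - 10 * vv u 0 x t * vv u 1 x t * vv u 3 x t
  + 5 * vv u 0 x t ^ 2 * vv u 4 x t - 50 * vv u 0 x t ^ 3 * vv u 2 x t + 24 * vv u 0 x t ^ 5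

section
variable {u : ℝ → ℝ → ℝ}

lemma Ff_t (hs : ContDiff ℝ (⊤ : ℕ∞) (Function.uncurry u))
    (hkdv : ∀ x t : ℝ,
      deriv (fun t' => u x t') t
        - 6 * u x t * deriv (fun x' => u x' t) x
        + deriv (deriv (deriv (fun x' => u x' t))) x = 0) (x t : ℝ) :
    HasDerivAt (fun t' => Ff u x t') (Tt u x t) t := by
  have A := vv_t2 hs hkdv x t
  have B := vv_t0 hs hkdv x t
  have h := ((A.pow 2).sub (((B.pow 2).const_mul (5:ℝ)).mul A)).add ((B.pow 4).const_mul (5:ℝ))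
  unfold Ff Tt
  exact h.congr_deriv (by simp only [Pi.pow_apply]; push_cast; ring)

lemma Gg_x (hs : ContDiff ℝ (⊤ : ℕ∞) (Function.uncurry u)) (x t : ℝ) :
    HasDerivAt (fun x' => Gg u x' t) (Tt u x t) x := by
  have a0 := vv_x hs 0 x t; have a1 := vv_x hs 1 x t; have a2 := vv_x hs 2 x t
  have a3 := vv_x hs 3 x t; have a4 := vv_x hs 4 x t
  have h1 := (a3.pow 2).sub ((a2.const_mul (2:ℝ)).mul a4)
  have h2 := h1.add (((a1.pow 2).const_mul (10:ℝ)).mul a2)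
  have h3 := h2.add ((a0.const_mul (16:ℝ)).mul (a2.pow 2))
  have h4 := h3.sub (((a0.const_mul (10:ℝ)).mul a1).mul a3)
  have h5 := h4.add (((a0.pow 2).const_mul (5:ℝ)).mul a4)
  have h6 := h5.sub (((a0.pow 3).const_mul (50:ℝ)).mul a2)
  have h := h6.add ((a0.pow 5).const_mul (24:ℝ))
  unfold Gg Tt
  exact h.congr_deriv (by simp only [Pi.pow_apply, Pi.mul_apply]; push_cast; ring)

lemma vv_abs_bound (hs : ContDiff ℝ (⊤ : ℕ∞) (Function.uncurry u)) (hdecay : RapidlyDecayingInX u)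
    (n : ℕ) {a b : ℝ} (hab : a ≤ b) :
    ∃ C, 0 ≤ C ∧ ∀ t ∈ Set.Icc a b, ∀ x,
      |vv u n x t| ≤ C ∧ (1 + x^2) * |vv u n x t| ≤ C := by
  obtain ⟨C0, h0⟩ := hdecay n 0 0 a b
  obtain ⟨C2, h2⟩ := hdecay n 0 2 a b
  simp only [iteratedDeriv_zero] at h0 h2
  have key : ∀ t x, iteratedDeriv n (fun x' => u x' t) x = vv u n x t := fun t x =>
    iter_eq_iteratedDeriv hs n t x
  refine ⟨|C0| + |C2|, by positivity, fun t ht x => ?_⟩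
  have b0 := h0 t ht x
  have b2 := h2 t ht x
  rw [key] at b0 b2
  simp only [pow_zero, one_mul] at b0
  have hx2 : |x|^2 * |vv u n x t| ≤ C2 := b2
  rw [sq_abs] at hx2
  constructor
  · linarith [le_abs_self C0, abs_nonneg C2]
  · nlinarith [le_abs_self C0, le_abs_self C2, abs_nonneg (vv u n x t)]

lemma wb {y A B cA cB : ℝ} (hA : y * A ≤ cA) (hB : B ≤ cB) (hB0 : 0 ≤ B) (hcA : 0 ≤ cA) :
    y * (A * B) ≤ cA * cB := by
  rw [← mul_assoc]; exact mul_le_mul hA hB hB0 hcA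

lemma final_div {y f D : ℝ} (hy : 0 < y) (h : |y * f| ≤ D) : |f| ≤ D / y := by
  rw [le_div_iff₀ hy]
  calc |f| * y = |y * f| := by rw [abs_mul, abs_of_pos hy, mul_comm]
    _ ≤ D := h

lemma Tt_bound (hs : ContDiff ℝ (⊤ : ℕ∞) (Function.uncurry u)) (hdecay : RapidlyDecayingInX u)
    {a b : ℝ} (hab : a ≤ b) :
    ∃ D : ℝ, ∀ t ∈ Set.Icc a b, ∀ x : ℝ, |Tt u x t| ≤ D / (1 + x^2) := by
  obtain ⟨c0, hc0, H0⟩ := vv_abs_bound hs hdecay 0 hab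
  obtain ⟨c1, hc1, H1⟩ := vv_abs_bound hs hdecay 1 hab
  obtain ⟨c2, hc2, H2⟩ := vv_abs_bound hs hdecay 2 hab
  obtain ⟨c3, hc3, H3⟩ := vv_abs_bound hs hdecay 3 hab
  obtain ⟨c5, hc5, H5⟩ := vv_abs_bound hs hdecay 5 hab
  refine ⟨36 * (c1 * (c2 * (c2))) + 150 * (c1 * (c0 * (c0 * (c2)))) + 22 * (c0 * (c2 * (c3))) + 50 * (c3 * (c0 * (c0 * (c0)))) + 2 * (c2 * (c5)) + 5 * (c5 * (c0 * (c0))) + 120 * (c1 * (c0 * (c0 * (c0 * (c0))))), fun t ht x => ?_⟩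
  have pos : (0:ℝ) < 1 + x^2 := by positivity
  have b0 := H0 t ht x
  have b1 := H1 t ht x
  have b2 := H2 t ht x
  have b3 := H3 t ht x
  have b5 := H5 t ht x
  have m1 : |(1+x^2) * (vv u 1 x t * (vv u 2 x t * (vv u 2 x t)))| ≤ c1 * (c2 * (c2)) := by
    simp only [abs_mul, abs_of_pos pos]
    exact wb b1.2 (mul_le_mul b2.1 b2.1 (by positivity) hc2) (by positivity) hc1
  obtain ⟨l1, r1⟩ := abs_le.mp m1
  have m2 : |(1+x^2) * (vv u 1 x t * (vv u 0 x t * (vv u 0 x t * (vv u 2 x t))))| ≤ c1 * (c0 * (c0 * (c2))) := by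
    simp only [abs_mul, abs_of_pos pos]
    exact wb b1.2 (mul_le_mul b0.1 (mul_le_mul b0.1 b2.1 (by positivity) hc0) (by positivity) hc0) (by positivity) hc1
  obtain ⟨l2, r2⟩ := abs_le.mp m2
  have m3 : |(1+x^2) * (vv u 0 x t * (vv u 2 x t * (vv u 3 x t)))| ≤ c0 * (c2 * (c3)) := by
    simp only [abs_mul, abs_of_pos pos]
    exact wb b0.2 (mul_le_mul b2.1 b3.1 (by positivity) hc2) (by positivity) hc0
  obtain ⟨l3, r3⟩ := abs_le.mp m3
  have m4 : |(1+x^2) * (vv u 3 x t * (vv u 0 x t * (vv u 0 x t * (vv u 0 x t))))| ≤ c3 * (c0 * (c0 * (c0))) := by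
    simp only [abs_mul, abs_of_pos pos]
    exact wb b3.2 (mul_le_mul b0.1 (mul_le_mul b0.1 b0.1 (by positivity) hc0) (by positivity) hc0) (by positivity) hc3
  obtain ⟨l4, r4⟩ := abs_le.mp m4
  have m5 : |(1+x^2) * (vv u 2 x t * (vv u 5 x t))| ≤ c2 * (c5) := by
    simp only [abs_mul, abs_of_pos pos]
    exact wb b2.2 b5.1 (by positivity) hc2
  obtain ⟨l5, r5⟩ := abs_le.mp m5
  have m6 : |(1+x^2) * (vv u 5 x t * (vv u 0 x t * (vv u 0 x t)))| ≤ c5 * (c0 * (c0)) := by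
    simp only [abs_mul, abs_of_pos pos]
    exact wb b5.2 (mul_le_mul b0.1 b0.1 (by positivity) hc0) (by positivity) hc5
  obtain ⟨l6, r6⟩ := abs_le.mp m6
  have m7 : |(1+x^2) * (vv u 1 x t * (vv u 0 x t * (vv u 0 x t * (vv u 0 x t * (vv u 0 x t)))))| ≤ c1 * (c0 * (c0 * (c0 * (c0)))) := by
    simp only [abs_mul, abs_of_pos pos]
    exact wb b1.2 (mul_le_mul b0.1 (mul_le_mul b0.1 (mul_le_mul b0.1 b0.1 (by positivity) hc0) (by positivity) hc0) (by positivity) hc0) (by positivity) hc1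
  obtain ⟨l7, r7⟩ := abs_le.mp m7
  refine final_div pos ?_
  unfold Tt
  refine abs_le.mpr ⟨?_, ?_⟩ <;> linarith [l1, r1, l2, r2, l3, r3, l4, r4, l5, r5, l6, r6, l7, r7]

lemma Gg_bound (hs : ContDiff ℝ (⊤ : ℕ∞) (Function.uncurry u)) (hdecay : RapidlyDecayingInX u)
    {a b : ℝ} (hab : a ≤ b) :
    ∃ D : ℝ, ∀ t ∈ Set.Icc a b, ∀ x : ℝ, |Gg u x t| ≤ D / (1 + x^2) := by
  obtain ⟨c0, hc0, H0⟩ := vv_abs_bound hs hdecay 0 hab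
  obtain ⟨c1, hc1, H1⟩ := vv_abs_bound hs hdecay 1 hab
  obtain ⟨c2, hc2, H2⟩ := vv_abs_bound hs hdecay 2 hab
  obtain ⟨c3, hc3, H3⟩ := vv_abs_bound hs hdecay 3 hab
  obtain ⟨c4, hc4, H4⟩ := vv_abs_bound hs hdecay 4 hab
  refine ⟨1 * (c3 * (c3)) + 2 * (c2 * (c4)) + 10 * (c2 * (c1 * (c1))) + 16 * (c2 * (c0 * (c2))) + 10 * (c1 * (c0 * (c3))) + 5 * (c4 * (c0 * (c0))) + 50 * (c2 * (c0 * (c0 * (c0)))) + 24 * (c0 * (c0 * (c0 * (c0 * (c0))))), fun t ht x => ?_⟩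
  have pos : (0:ℝ) < 1 + x^2 := by positivity
  have b0 := H0 t ht x
  have b1 := H1 t ht x
  have b2 := H2 t ht x
  have b3 := H3 t ht x
  have b4 := H4 t ht x
  have m1 : |(1+x^2) * (vv u 3 x t * (vv u 3 x t))| ≤ c3 * (c3) := by
    simp only [abs_mul, abs_of_pos pos]
    exact wb b3.2 b3.1 (by positivity) hc3
  obtain ⟨l1, r1⟩ := abs_le.mp m1
  have m2 : |(1+x^2) * (vv u 2 x t * (vv u 4 x t))| ≤ c2 * (c4) := by
    simp only [abs_mul, abs_of_pos pos]
    exact wb b2.2 b4.1 (by positivity) hc2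
  obtain ⟨l2, r2⟩ := abs_le.mp m2
  have m3 : |(1+x^2) * (vv u 2 x t * (vv u 1 x t * (vv u 1 x t)))| ≤ c2 * (c1 * (c1)) := by
    simp only [abs_mul, abs_of_pos pos]
    exact wb b2.2 (mul_le_mul b1.1 b1.1 (by positivity) hc1) (by positivity) hc2
  obtain ⟨l3, r3⟩ := abs_le.mp m3
  have m4 : |(1+x^2) * (vv u 2 x t * (vv u 0 x t * (vv u 2 x t)))| ≤ c2 * (c0 * (c2)) := by
    simp only [abs_mul, abs_of_pos pos]
    exact wb b2.2 (mul_le_mul b0.1 b2.1 (by positivity) hc0) (by positivity) hc2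
  obtain ⟨l4, r4⟩ := abs_le.mp m4
  have m5 : |(1+x^2) * (vv u 1 x t * (vv u 0 x t * (vv u 3 x t)))| ≤ c1 * (c0 * (c3)) := by
    simp only [abs_mul, abs_of_pos pos]
    exact wb b1.2 (mul_le_mul b0.1 b3.1 (by positivity) hc0) (by positivity) hc1
  obtain ⟨l5, r5⟩ := abs_le.mp m5
  have m6 : |(1+x^2) * (vv u 4 x t * (vv u 0 x t * (vv u 0 x t)))| ≤ c4 * (c0 * (c0)) := by
    simp only [abs_mul, abs_of_pos pos]
    exact wb b4.2 (mul_le_mul b0.1 b0.1 (by positivity) hc0) (by positivity) hc4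
  obtain ⟨l6, r6⟩ := abs_le.mp m6
  have m7 : |(1+x^2) * (vv u 2 x t * (vv u 0 x t * (vv u 0 x t * (vv u 0 x t))))| ≤ c2 * (c0 * (c0 * (c0))) := by
    simp only [abs_mul, abs_of_pos pos]
    exact wb b2.2 (mul_le_mul b0.1 (mul_le_mul b0.1 b0.1 (by positivity) hc0) (by positivity) hc0) (by positivity) hc2
  obtain ⟨l7, r7⟩ := abs_le.mp m7
  have m8 : |(1+x^2) * (vv u 0 x t * (vv u 0 x t * (vv u 0 x t * (vv u 0 x t * (vv u 0 x t)))))| ≤ c0 * (c0 * (c0 * (c0 * (c0)))) := by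
    simp only [abs_mul, abs_of_pos pos]
    exact wb b0.2 (mul_le_mul b0.1 (mul_le_mul b0.1 (mul_le_mul b0.1 b0.1 (by positivity) hc0) (by positivity) hc0) (by positivity) hc0) (by positivity) hc0
  obtain ⟨l8, r8⟩ := abs_le.mp m8
  refine final_div pos ?_
  unfold Gg
  refine abs_le.mpr ⟨?_, ?_⟩ <;> linarith [l1, r1, l2, r2, l3, r3, l4, r4, l5, r5, l6, r6, l7, r7, l8, r8]

lemma Ff_bound (hs : ContDiff ℝ (⊤ : ℕ∞) (Function.uncurry u)) (hdecay : RapidlyDecayingInX u)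
    {a b : ℝ} (hab : a ≤ b) :
    ∃ D : ℝ, ∀ t ∈ Set.Icc a b, ∀ x : ℝ, |Ff u x t| ≤ D / (1 + x^2) := by
  obtain ⟨c0, hc0, H0⟩ := vv_abs_bound hs hdecay 0 hab
  obtain ⟨c2, hc2, H2⟩ := vv_abs_bound hs hdecay 2 hab
  refine ⟨1 * (c2 * (c2)) + 5 * (c2 * (c0 * (c0))) + 5 * (c0 * (c0 * (c0 * (c0)))), fun t ht x => ?_⟩
  have pos : (0:ℝ) < 1 + x^2 := by positivity
  have b0 := H0 t ht x
  have b2 := H2 t ht x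
  have m1 : |(1+x^2) * (vv u 2 x t * (vv u 2 x t))| ≤ c2 * (c2) := by
    simp only [abs_mul, abs_of_pos pos]
    exact wb b2.2 b2.1 (by positivity) hc2
  obtain ⟨l1, r1⟩ := abs_le.mp m1
  have m2 : |(1+x^2) * (vv u 2 x t * (vv u 0 x t * (vv u 0 x t)))| ≤ c2 * (c0 * (c0)) := by
    simp only [abs_mul, abs_of_pos pos]
    exact wb b2.2 (mul_le_mul b0.1 b0.1 (by positivity) hc0) (by positivity) hc2
  obtain ⟨l2, r2⟩ := abs_le.mp m2
  have m3 : |(1+x^2) * (vv u 0 x t * (vv u 0 x t * (vv u 0 x t * (vv u 0 x t))))| ≤ c0 * (c0 * (c0 * (c0))) := by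
    simp only [abs_mul, abs_of_pos pos]
    exact wb b0.2 (mul_le_mul b0.1 (mul_le_mul b0.1 b0.1 (by positivity) hc0) (by positivity) hc0) (by positivity) hc0
  obtain ⟨l3, r3⟩ := abs_le.mp m3
  refine final_div pos ?_
  unfold Ff
  refine abs_le.mpr ⟨?_, ?_⟩ <;> linarith [l1, r1, l2, r2, l3, r3]

lemma Ff_cont (hs : ContDiff ℝ (⊤ : ℕ∞) (Function.uncurry u)) (t : ℝ) :
    Continuous fun x => Ff u x t := by
  have c0 := vv_cont hs 0 t; have c2 := vv_cont hs 2 t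
  unfold Ff
  fun_prop

lemma Tt_cont (hs : ContDiff ℝ (⊤ : ℕ∞) (Function.uncurry u)) (t : ℝ) :
    Continuous fun x => Tt u x t := by
  have c0 := vv_cont hs 0 t; have c1 := vv_cont hs 1 t; have c2 := vv_cont hs 2 t
  have c3 := vv_cont hs 3 t; have c5 := vv_cont hs 5 t
  unfold Tt
  fun_prop

lemma integrable_of_decay {f : ℝ → ℝ} (hc : Continuous f) {D : ℝ}
    (hb : ∀ x, |f x| ≤ D / (1 + x^2)) : Integrable f := by
  have hD : Integrable (fun x : ℝ => D * (1 + x^2)⁻¹) := integrable_inv_one_add_sq.const_mul D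
  refine hD.mono' hc.aestronglyMeasurable (Filter.Eventually.of_forall fun x => ?_)
  rw [Real.norm_eq_abs]
  calc |f x| ≤ D / (1 + x^2) := hb x
    _ = D * (1 + x^2)⁻¹ := div_eq_mul_inv _ _

lemma int_Tt_zero (hs : ContDiff ℝ (⊤ : ℕ∞) (Function.uncurry u)) (hdecay : RapidlyDecayingInX u)
    (t : ℝ) : ∫ x : ℝ, Tt u x t = 0 := by
  obtain ⟨D, hG⟩ := Gg_bound hs hdecay (le_refl t)
  obtain ⟨DT, hT⟩ := Tt_bound hs hdecay (le_refl t)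
  have ht : t ∈ Set.Icc t t := ⟨le_rfl, le_rfl⟩
  have hbnd : ∀ x, ‖Gg u x t‖ ≤ D / (1 + x^2) := fun x => by
    rw [Real.norm_eq_abs]; exact hG t ht x
  have h2top : Filter.Tendsto (fun x : ℝ => 1 + x^2) Filter.atTop Filter.atTop :=
    Filter.tendsto_atTop_add_const_left _ 1 (Filter.tendsto_pow_atTop two_ne_zero)
  have h2bot : Filter.Tendsto (fun x : ℝ => 1 + x^2) Filter.atBot Filter.atTop := by
    have h := Filter.tendsto_atTop_add_const_left Filter.atBot (1:ℝ)
      ((Filter.tendsto_pow_atTop (two_ne_zero)).comp Filter.tendsto_neg_atBot_atTop)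
    have e : (fun x : ℝ => 1 + (-x)^2) = fun x : ℝ => 1 + x^2 := funext fun x => by ring
    rw [← e]
    exact h
  have hdiv_top : Filter.Tendsto (fun x : ℝ => D / (1 + x^2)) Filter.atTop (nhds 0) :=
    Filter.Tendsto.div_atTop tendsto_const_nhds h2top
  have hdiv_bot : Filter.Tendsto (fun x : ℝ => D / (1 + x^2)) Filter.atBot (nhds 0) :=
    Filter.Tendsto.div_atTop tendsto_const_nhds h2bot
  have gtop : Filter.Tendsto (fun x => Gg u x t) Filter.atTop (nhds 0) :=
    squeeze_zero_norm hbnd hdiv_top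
  have gbot : Filter.Tendsto (fun x => Gg u x t) Filter.atBot (nhds 0) :=
    squeeze_zero_norm hbnd hdiv_bot
  have hTint : Integrable (fun x => Tt u x t) :=
    integrable_of_decay (Tt_cont hs t) (fun x => hT t ht x)
  have hIoi : ∫ x in Set.Ioi (0:ℝ), Tt u x t = 0 - Gg u 0 t :=
    MeasureTheory.integral_Ioi_of_hasDerivAt_of_tendsto'
      (fun x _ => Gg_x hs x t) hTint.integrableOn gtop
  have hIic : ∫ x in Set.Iic (0:ℝ), Tt u x t = Gg u 0 t - 0 :=
    MeasureTheory.integral_Iic_of_hasDerivAt_of_tendsto'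
      (fun x _ => Gg_x hs x t) hTint.integrableOn gbot
  have hsum := intervalIntegral.integral_Iic_add_Ioi (b := (0:ℝ)) hTint.integrableOn hTint.integrableOn
  linarith [hIoi, hIic, hsum]

lemma hasDeriv_integral (hs : ContDiff ℝ (⊤ : ℕ∞) (Function.uncurry u))
    (hdecay : RapidlyDecayingInX u)
    (hkdv : ∀ x t : ℝ,
      deriv (fun t' => u x t') t
        - 6 * u x t * deriv (fun x' => u x' t) x
        + deriv (deriv (deriv (fun x' => u x' t))) x = 0) (t₀ : ℝ) :
    HasDerivAt (fun t => ∫ x : ℝ, Ff u x t) 0 t₀ := by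
  obtain ⟨D, hT⟩ := Tt_bound hs hdecay (show t₀ - 1 ≤ t₀ + 1 by linarith)
  obtain ⟨DF, hF⟩ := Ff_bound hs hdecay (le_refl t₀)
  have hmeas : ∀ᶠ s in nhds t₀, AEStronglyMeasurable (fun x => Ff u x s) volume :=
    Filter.Eventually.of_forall fun s => (Ff_cont hs s).aestronglyMeasurable
  have hint : Integrable (fun x => Ff u x t₀) :=
    integrable_of_decay (Ff_cont hs t₀) (fun x => hF t₀ ⟨le_rfl, le_rfl⟩ x)
  have h'meas : AEStronglyMeasurable (fun x => Tt u x t₀) volume :=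
    (Tt_cont hs t₀).aestronglyMeasurable
  have hbound : ∀ᵐ x : ℝ, ∀ s ∈ Metric.ball t₀ 1, ‖Tt u x s‖ ≤ D / (1 + x^2) := by
    refine Filter.Eventually.of_forall fun x s hsx => ?_
    rw [Real.norm_eq_abs]
    refine hT s ?_ x
    rw [Metric.mem_ball, Real.dist_eq] at hsx
    have := abs_lt.mp hsx
    exact ⟨by linarith [this.1], by linarith [this.2]⟩
  have hbint : Integrable (fun x : ℝ => D / (1 + x^2)) := by
    simpa [div_eq_mul_inv] using integrable_inv_one_add_sq.const_mul D
  have hdiff : ∀ᵐ x : ℝ, ∀ s ∈ Metric.ball t₀ 1,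
      HasDerivAt (fun s' => Ff u x s') (Tt u x s) s :=
    Filter.Eventually.of_forall fun x s _ => Ff_t hs hkdv x s
  have key := hasDerivAt_integral_of_dominated_loc_of_deriv_le (Metric.ball_mem_nhds t₀ one_pos) hmeas hint h'meas
    hbound hbint hdiff
  have h0 : ∫ x : ℝ, Tt u x t₀ = 0 := int_Tt_zero hs hdecay t₀
  rw [← h0]
  exact key.2

end


/-- For a smooth, rapidly decaying solution of the KdV equation
`u_t − 6uu_x + u_{xxx} = 0`, the functional
`t ↦ ∫_ℝ (u_{xx}² − 5u²u_{xx} + 5u⁴) dx` is constant. -/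

theorem kdv_fourth_integral (u : ℝ → ℝ → ℝ)
    (hsmooth : ContDiff ℝ (⊤ : ℕ∞) (Function.uncurry u))
    (hdecay : RapidlyDecayingInX u)
    (hkdv : ∀ x t : ℝ,
      deriv (fun t' => u x t') t
        - 6 * u x t * deriv (fun x' => u x' t) x
        + deriv (deriv (deriv (fun x' => u x' t))) x = 0) :
    ∀ t₁ t₂ : ℝ,
      ∫ x : ℝ, ((deriv (deriv (fun x' => u x' t₁)) x) ^ 2
          - 5 * (u x t₁) ^ 2 * deriv (deriv (fun x' => u x' t₁)) x + 5 * (u x t₁) ^ 4)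
        = ∫ x : ℝ, ((deriv (deriv (fun x' => u x' t₂)) x) ^ 2
          - 5 * (u x t₂) ^ 2 * deriv (deriv (fun x' => u x' t₂)) x + 5 * (u x t₂) ^ 4) := by
  intro t₁ t₂
  have key : ∀ t : ℝ,
      (∫ x : ℝ, ((deriv (deriv (fun x' => u x' t)) x) ^ 2
          - 5 * (u x t) ^ 2 * deriv (deriv (fun x' => u x' t)) x + 5 * (u x t) ^ 4))
        = ∫ x : ℝ, Ff u x t := by
    intro t
    have d1 : deriv (fun x' => u x' t) = fun y => vv u 1 y t :=
      funext fun y => (vv_x hsmooth 0 y t).deriv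
    have d2 : ∀ x, deriv (deriv (fun x' => u x' t)) x = vv u 2 x t := fun x => by
      rw [d1]; exact (vv_x hsmooth 1 x t).deriv
    congr 1
    funext x
    rw [d2 x]
    show _ = vv u 2 x t ^ 2 - 5 * vv u 0 x t ^ 2 * vv u 2 x t + 5 * vv u 0 x t ^ 4
    rw [vv_zero]
  rw [key t₁, key t₂]
  have hI : ∀ t : ℝ, HasDerivAt (fun t' => ∫ x : ℝ, Ff u x t') 0 t :=
    hasDeriv_integral hsmooth hdecay hkdv
  exact is_const_of_deriv_eq_zero (fun t => (hI t).differentiableAt)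
    (fun t => (hI t).deriv) t₁ t₂
end

section
/- Let γ ∈ ℝ and let u, v : ℝ × ℝ → ℝ be smooth, suppose u, v and all their partial derivatives decay rapidly in x (faster than any power of 1/|x|) locally uniformly in t, suppose v_x = u, and suppose u satisfies the Ostrovsky equation u_t + u_{xxx} − 6uu_x = γv. Then the function t ↦ ∫_ℝ u(x,t)² dx is constant. -/
open MeasureTheory

open Filter Set
open scoped ContDiff Topology

private lemma aux_tendsto_atTop {h : ℝ → ℝ} {K : ℝ} (hK : ∀ x, |x| * |h x| ≤ K) :
    Tendsto h atTop (𝓝 0) := by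
  apply squeeze_zero_norm' (a := fun x => K / x)
  · filter_upwards [eventually_ge_atTop (1 : ℝ)] with x hx
    rw [Real.norm_eq_abs, le_div_iff₀ (by linarith)]
    have := hK x
    rw [abs_of_nonneg (by linarith : (0:ℝ) ≤ x)] at this
    linarith [this]
  · exact tendsto_const_nhds.div_atTop tendsto_id

private lemma aux_tendsto_atBot {h : ℝ → ℝ} {K : ℝ} (hK : ∀ x, |x| * |h x| ≤ K) :
    Tendsto h atBot (𝓝 0) := by
  apply squeeze_zero_norm' (a := fun x => K / (-x))
  · filter_upwards [eventually_le_atBot (-1 : ℝ)] with x hx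
    rw [Real.norm_eq_abs, le_div_iff₀ (by linarith)]
    have := hK x
    rw [abs_of_nonpos (by linarith : x ≤ (0:ℝ))] at this
    linarith [this]
  · exact tendsto_const_nhds.div_atTop (tendsto_neg_atBot_atTop)

private lemma aux_le_bound {y x A B : ℝ} (hA : |y| ≤ A) (hB : x ^ 2 * |y| ≤ B) :
    |y| ≤ (A + B) * (1 + x ^ 2)⁻¹ := by
  rw [← div_eq_mul_inv, le_div_iff₀ (by positivity)]
  nlinarith [abs_nonneg y, sq_nonneg x]

private lemma aux_integrable {h : ℝ → ℝ} (hc : Continuous h) {A B : ℝ}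
    (hA : ∀ x, |h x| ≤ A) (hB : ∀ x, x ^ 2 * |h x| ≤ B) : Integrable h := by
  apply (integrable_inv_one_add_sq.const_mul (A + B)).mono' hc.aestronglyMeasurable
  filter_upwards with x
  rw [Real.norm_eq_abs]
  exact aux_le_bound (hA x) (hB x)

/-- For smooth, rapidly decaying `u, v` with `v_x = u` and `u` solving the
Ostrovsky equation `u_t + u_{xxx} − 6uu_x = γv`, the momentum `t ↦ ∫_ℝ u(x,t)² dx` is
constant. -/
theorem ostrovsky_momentum_conserved (γ : ℝ) (u v : ℝ → ℝ → ℝ)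
    (husmooth : ContDiff ℝ (⊤ : ℕ∞) (Function.uncurry u))
    (hvsmooth : ContDiff ℝ (⊤ : ℕ∞) (Function.uncurry v))
    (hudecay : RapidlyDecayingInX u)
    (hvdecay : RapidlyDecayingInX v)
    (hvx : ∀ x t : ℝ, deriv (fun x' => v x' t) x = u x t)
    (hostrovsky : ∀ x t : ℝ,
      deriv (fun t' => u x t') t
        + deriv (deriv (deriv (fun x' => u x' t))) x
        - 6 * u x t * deriv (fun x' => u x' t) x = γ * v x t) :
    ∀ t₁ t₂ : ℝ, ∫ x : ℝ, (u x t₁) ^ 2 = ∫ x : ℝ, (u x t₂) ^ 2 := by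
  -- the time partial derivative of `u`, as a function
  set p : ℝ → ℝ → ℝ := fun x t => fderiv ℝ (Function.uncurry u) (x, t) (0, 1) with hp_def
  have hpt : ∀ x t : ℝ, HasDerivAt (fun t' => u x t') (p x t) t := by
    intro x t
    have hd : HasFDerivAt (Function.uncurry u) (fderiv ℝ (Function.uncurry u) (x, t)) (x, t) :=
      (((husmooth.of_le (by simp)).differentiable one_ne_zero) (x, t)).hasFDerivAt
    have hg : HasDerivAt (fun t' : ℝ => (x, t')) ((0 : ℝ), (1 : ℝ)) t :=
      (hasDerivAt_const t x).prodMk (hasDerivAt_id t)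
    exact hd.comp_hasDerivAt t hg
  have hptderiv : ∀ x t : ℝ, deriv (fun t' => u x t') t = p x t := fun x t => (hpt x t).deriv
  have hpcont : ∀ t : ℝ, Continuous (fun x => p x t) := by
    intro t
    have h1 : Continuous (fun q : ℝ × ℝ => fderiv ℝ (Function.uncurry u) q) :=
      (husmooth.of_le (by simp)).continuous_fderiv one_ne_zero
    exact (h1.comp (continuous_id.prodMk continuous_const)).clm_apply continuous_const
  have hUcont : ∀ t : ℝ, Continuous (fun x => u x t) := fun t =>
    (husmooth.continuous).comp (continuous_id.prodMk continuous_const)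
  have hUsmooth : ∀ t : ℝ, ContDiff ℝ ∞ (fun x' => u x' t) := fun t =>
    (husmooth.of_le (by simp)).comp (contDiff_id.prodMk contDiff_const)
  have hVsmooth : ∀ t : ℝ, ContDiff ℝ ∞ (fun x' => v x' t) := fun t =>
    (hvsmooth.of_le (by simp)).comp (contDiff_id.prodMk contDiff_const)
  -- KEY STEP: at each fixed time, the integral of `2 u u_t` vanishes.
  have key : ∀ t : ℝ, (∫ x : ℝ, 2 * u x t * p x t) = 0 := by
    intro t
    have htt : t ∈ Set.Icc t t := by simp
    -- decay bounds at the fixed time t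
    obtain ⟨C00, hC00⟩ := hudecay 0 0 0 t t
    obtain ⟨C01, hC01⟩ := hudecay 0 0 1 t t
    obtain ⟨C02, hC02⟩ := hudecay 0 0 2 t t
    obtain ⟨C10, hC10⟩ := hudecay 1 0 0 t t
    obtain ⟨C11, hC11⟩ := hudecay 1 0 1 t t
    obtain ⟨C20, hC20⟩ := hudecay 2 0 0 t t
    obtain ⟨D00, hD00⟩ := hudecay 0 1 0 t t
    obtain ⟨E0, hE0⟩ := hvdecay 0 0 0 t t
    obtain ⟨E1, hE1⟩ := hvdecay 0 0 1 t t
    have hb00 : ∀ x : ℝ, |u x t| ≤ C00 := by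
      intro x; simpa [iteratedDeriv_zero] using hC00 t htt x
    have hb01 : ∀ x : ℝ, |x| * |u x t| ≤ C01 := by
      intro x; simpa [iteratedDeriv_zero] using hC01 t htt x
    have hb02 : ∀ x : ℝ, |x| ^ 2 * |u x t| ≤ C02 := by
      intro x; simpa [iteratedDeriv_zero] using hC02 t htt x
    have hb10 : ∀ x : ℝ, |deriv (fun x' => u x' t) x| ≤ C10 := by
      intro x; simpa [iteratedDeriv_one, iteratedDeriv_zero] using hC10 t htt x
    have hb11 : ∀ x : ℝ, |x| * |deriv (fun x' => u x' t) x| ≤ C11 := by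
      intro x; simpa [iteratedDeriv_one, iteratedDeriv_zero] using hC11 t htt x
    have hb20 : ∀ x : ℝ, |deriv (deriv (fun x' => u x' t)) x| ≤ C20 := by
      intro x
      simpa [iteratedDeriv_succ, iteratedDeriv_one, iteratedDeriv_zero] using hC20 t htt x
    have hbD : ∀ x : ℝ, |p x t| ≤ D00 := by
      intro x
      rw [← hptderiv x t]
      simpa [iteratedDeriv_one, iteratedDeriv_zero] using hD00 t htt x
    have he0 : ∀ x : ℝ, |v x t| ≤ E0 := by
      intro x; simpa [iteratedDeriv_zero] using hE0 t htt x
    have he1 : ∀ x : ℝ, |x| * |v x t| ≤ E1 := by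
      intro x; simpa [iteratedDeriv_zero] using hE1 t htt x
    have hC00n : 0 ≤ C00 := le_trans (abs_nonneg _) (hb00 0)
    have hC01n : 0 ≤ C01 := le_trans (by positivity) (hb01 1)
    have hC11n : 0 ≤ C11 := le_trans (by positivity) (hb11 1)
    have hC20n : 0 ≤ C20 := le_trans (abs_nonneg _) (hb20 0)
    have hE1n : 0 ≤ E1 := le_trans (by positivity) (he1 1)
    -- differentiability in x at the fixed time
    have h1 := contDiff_infty_iff_deriv.1 (hUsmooth t)
    have h2 := contDiff_infty_iff_deriv.1 h1.2
    have h3 := contDiff_infty_iff_deriv.1 h2.2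
    have hdV := (contDiff_infty_iff_deriv.1 (hVsmooth t)).1
    -- the antiderivative g with g' = 2 u u_t
    set g : ℝ → ℝ := fun y =>
      -(2 * u y t * deriv (deriv (fun x' => u x' t)) y) + deriv (fun x' => u x' t) y ^ 2 +
        (4 * u y t ^ 3 + γ * v y t ^ 2) with hg_def
    have hg : ∀ x : ℝ, HasDerivAt g (2 * u x t * p x t) x := by
      intro x
      have hU : HasDerivAt (fun x' => u x' t) (deriv (fun x' => u x' t) x) x :=
        (h1.1 x).hasDerivAt
      have hU' : HasDerivAt (deriv (fun x' => u x' t)) (deriv (deriv (fun x' => u x' t)) x) x :=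
        (h2.1 x).hasDerivAt
      have hU'' : HasDerivAt (deriv (deriv (fun x' => u x' t)))
          (deriv (deriv (deriv (fun x' => u x' t))) x) x := (h3.1 x).hasDerivAt
      have hV : HasDerivAt (fun x' => v x' t) (u x t) x := by
        have := (hdV x).hasDerivAt
        rwa [hvx x t] at this
      have h := (((hU.const_mul 2).mul hU'').neg.add (hU'.pow 2)).add
        (((hU.pow 3).const_mul 4).add ((hV.pow 2).const_mul γ))
      refine h.congr_deriv (Eq.symm ?_)
      have heq := hostrovsky x t
      rw [hptderiv x t] at heq
      push_cast
      linear_combination (2 * u x t) * heq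
    -- `g` tends to 0 at ±∞
    have hK : ∀ x : ℝ, |x| * |g x| ≤
        2 * (C01 * C20) + C11 * C10 + (4 * (C01 * (C00 * C00)) + |γ| * (E1 * E0)) := by
      intro x
      have habs : |g x| ≤ 2 * |u x t| * |deriv (deriv (fun x' => u x' t)) x| +
          |deriv (fun x' => u x' t) x| * |deriv (fun x' => u x' t) x| +
          (4 * (|u x t| * (|u x t| * |u x t|)) + |γ| * (|v x t| * |v x t|)) := by
        rw [hg_def]
        calc |(-(2 * u x t * deriv (deriv (fun x' => u x' t)) x) +
              deriv (fun x' => u x' t) x ^ 2 + (4 * u x t ^ 3 + γ * v x t ^ 2))|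
            ≤ |(-(2 * u x t * deriv (deriv (fun x' => u x' t)) x) +
              deriv (fun x' => u x' t) x ^ 2)| + |4 * u x t ^ 3 + γ * v x t ^ 2| :=
              abs_add_le _ _
          _ ≤ |(-(2 * u x t * deriv (deriv (fun x' => u x' t)) x))| +
              |deriv (fun x' => u x' t) x ^ 2| + (|4 * u x t ^ 3| + |γ * v x t ^ 2|) := by
              gcongr <;> exact abs_add_le _ _
          _ = 2 * |u x t| * |deriv (deriv (fun x' => u x' t)) x| +
              |deriv (fun x' => u x' t) x| * |deriv (fun x' => u x' t) x| +
              (4 * (|u x t| * (|u x t| * |u x t|)) + |γ| * (|v x t| * |v x t|)) := by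
              simp only [abs_neg, abs_mul, abs_pow, abs_two]
              rw [show |(4:ℝ)| = 4 from by norm_num]
              ring
      have p1 : (|x| * |u x t|) * |deriv (deriv (fun x' => u x' t)) x| ≤ C01 * C20 :=
        mul_le_mul (hb01 x) (hb20 x) (abs_nonneg _) hC01n
      have p2 : (|x| * |deriv (fun x' => u x' t) x|) * |deriv (fun x' => u x' t) x| ≤
          C11 * C10 := mul_le_mul (hb11 x) (hb10 x) (abs_nonneg _) hC11n
      have p3 : (|x| * |u x t|) * (|u x t| * |u x t|) ≤ C01 * (C00 * C00) :=
        mul_le_mul (hb01 x) (mul_le_mul (hb00 x) (hb00 x) (abs_nonneg _) hC00n)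
          (by positivity) hC01n
      have p4 : (|x| * |v x t|) * |v x t| ≤ E1 * E0 :=
        mul_le_mul (he1 x) (he0 x) (abs_nonneg _) hE1n
      nlinarith [habs, p1, p2, p3, p4, abs_nonneg γ, abs_nonneg x,
        mul_le_mul_of_nonneg_left p4 (abs_nonneg γ),
        mul_le_mul_of_nonneg_left habs (abs_nonneg x)]
    have ht1 : Tendsto g atTop (𝓝 0) := aux_tendsto_atTop hK
    have ht2 : Tendsto g atBot (𝓝 0) := aux_tendsto_atBot hK
    -- integrability of the integrand
    have hcontF : Continuous fun x => 2 * u x t * p x t :=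
      (continuous_const.mul (hUcont t)).mul (hpcont t)
    have hA : ∀ x : ℝ, |2 * u x t * p x t| ≤ 2 * C00 * D00 := by
      intro x
      rw [abs_mul, abs_mul, abs_two]
      have := mul_le_mul (hb00 x) (hbD x) (abs_nonneg _) hC00n
      nlinarith [this, abs_nonneg (u x t), abs_nonneg (p x t)]
    have hB : ∀ x : ℝ, x ^ 2 * |2 * u x t * p x t| ≤ 2 * C02 * D00 := by
      intro x
      rw [abs_mul, abs_mul, abs_two, ← sq_abs x]
      have hD0n : 0 ≤ D00 := le_trans (abs_nonneg _) (hbD 0)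
      have := mul_le_mul (hb02 x) (hbD x) (abs_nonneg _)
        (le_trans (by positivity) (hb02 1))
      nlinarith [this, abs_nonneg (u x t), abs_nonneg (p x t), sq_nonneg |x|,
        mul_le_mul_of_nonneg_right (hb02 x) (abs_nonneg (p x t))]
    have hint : Integrable fun x => 2 * u x t * p x t := aux_integrable hcontF hA hB
    have hIoi : (∫ x in Set.Ioi (0:ℝ), 2 * u x t * p x t) = 0 - g 0 :=
      integral_Ioi_of_hasDerivAt_of_tendsto' (fun x _ => hg x) hint.integrableOn ht1
    have hIic : (∫ x in Set.Iic (0:ℝ), 2 * u x t * p x t) = g 0 - 0 :=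
      integral_Iic_of_hasDerivAt_of_tendsto' (fun x _ => hg x) hint.integrableOn ht2
    have := intervalIntegral.integral_Iic_add_Ioi (b := (0:ℝ)) hint.integrableOn hint.integrableOn
    rw [← this, hIoi, hIic]
    ring
  -- derivative of the momentum functional is zero everywhere
  have hF : ∀ t₀ : ℝ, HasDerivAt (fun s => ∫ x : ℝ, u x s ^ 2) 0 t₀ := by
    intro t₀
    obtain ⟨C00, hC00⟩ := hudecay 0 0 0 (t₀ - 1) (t₀ + 1)
    obtain ⟨C02, hC02⟩ := hudecay 0 0 2 (t₀ - 1) (t₀ + 1)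
    obtain ⟨D00, hD00⟩ := hudecay 0 1 0 (t₀ - 1) (t₀ + 1)
    have hb00 : ∀ s ∈ Set.Icc (t₀ - 1) (t₀ + 1), ∀ x : ℝ, |u x s| ≤ C00 := by
      intro s hs x; simpa [iteratedDeriv_zero] using hC00 s hs x
    have hb02 : ∀ s ∈ Set.Icc (t₀ - 1) (t₀ + 1), ∀ x : ℝ, |x| ^ 2 * |u x s| ≤ C02 := by
      intro s hs x; simpa [iteratedDeriv_zero] using hC02 s hs x
    have hbD : ∀ s ∈ Set.Icc (t₀ - 1) (t₀ + 1), ∀ x : ℝ, |p x s| ≤ D00 := by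
      intro s hs x
      rw [← hptderiv x s]
      simpa [iteratedDeriv_one, iteratedDeriv_zero] using hD00 s hs x
    have ht₀ : t₀ ∈ Set.Icc (t₀ - 1) (t₀ + 1) := by constructor <;> linarith
    have hC00n : 0 ≤ C00 := le_trans (abs_nonneg _) (hb00 t₀ ht₀ 0)
    have hC02n : 0 ≤ C02 := le_trans (by positivity) (hb02 t₀ ht₀ 1)
    have hD00n : 0 ≤ D00 := le_trans (abs_nonneg _) (hbD t₀ ht₀ 0)
    have hball : ∀ s ∈ Metric.ball t₀ (1:ℝ), s ∈ Set.Icc (t₀ - 1) (t₀ + 1) := by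
      intro s hs
      rw [Metric.mem_ball, Real.dist_eq] at hs
      have := abs_lt.1 hs
      constructor <;> linarith [this.1, this.2]
    have hmain := hasDerivAt_integral_of_dominated_loc_of_deriv_le
      (F := fun s x => u x s ^ 2) (F' := fun s x => 2 * u x s * p x s)
      (bound := fun x => (2 * C00 * D00 + 2 * C02 * D00) * (1 + x ^ 2)⁻¹)
      (μ := volume) (x₀ := t₀) (Metric.ball_mem_nhds t₀ one_pos)
      (Eventually.of_forall fun s => ((hUcont s).pow 2).aestronglyMeasurable)
      ?hFint ?hF'meas ?hbound ?hboundint ?hdiff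
    case hFint =>
      apply aux_integrable (h := fun x => u x t₀ ^ 2) ((hUcont t₀).pow 2) (A := C00 * C00) (B := C02 * C00)
      · intro x
        rw [abs_pow, sq]
        exact mul_le_mul (hb00 t₀ ht₀ x) (hb00 t₀ ht₀ x) (abs_nonneg _) hC00n
      · intro x
        rw [abs_pow, ← sq_abs x]
        calc |x| ^ 2 * |u x t₀| ^ 2 = (|x| ^ 2 * |u x t₀|) * |u x t₀| := by ring
          _ ≤ C02 * C00 := mul_le_mul (hb02 t₀ ht₀ x) (hb00 t₀ ht₀ x) (abs_nonneg _) hC02n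
    case hF'meas =>
      exact ((continuous_const.mul (hUcont t₀)).mul (hpcont t₀)).aestronglyMeasurable
    case hbound =>
      filter_upwards with x
      intro s hs
      have hs' := hball s hs
      rw [Real.norm_eq_abs]
      apply le_trans (aux_le_bound (A := 2 * C00 * D00) (B := 2 * C02 * D00) ?_ ?_) le_rfl
      · rw [abs_mul, abs_mul, abs_two]
        have := mul_le_mul (hb00 s hs' x) (hbD s hs' x) (abs_nonneg _) hC00n
        nlinarith [this]
      · rw [abs_mul, abs_mul, abs_two, ← sq_abs x]
        have := mul_le_mul (hb02 s hs' x) (hbD s hs' x) (abs_nonneg _) hC02n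
        nlinarith [this]
    case hboundint =>
      exact integrable_inv_one_add_sq.const_mul _
    case hdiff =>
      filter_upwards with x
      intro s _
      have := (hpt x s).pow 2
      refine this.congr_deriv ?_
      push_cast
      ring
    have hD := hmain.2
    rwa [key t₀] at hD
  have hdiffF : Differentiable ℝ (fun s => ∫ x : ℝ, u x s ^ 2) := fun s =>
    (hF s).differentiableAt
  intro t₁ t₂
  exact is_const_of_deriv_eq_zero hdiffF (fun s => (hF s).deriv) t₁ t₂
end

section
/- Let γ ∈ ℝ and let u, v, w : ℝ × ℝ → ℝ be smooth, suppose u, v, w and all their partial derivatives decay rapidly in x (faster than any power of 1/|x|) locally uniformly in t, suppose v_x = u and w_x = v, and suppose u satisfies the Ostrovsky equation u_t + u_{xxx} − 6uu_x = γv. Then the modified Hamiltonian t ↦ −(1/2)∫_ℝ ( u_x(x,t)² + 2u(x,t)³ ) dx + (γ/2)∫_ℝ v(x,t)² dx is constant. -/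
open MeasureTheory Filter Set

noncomputable section OstAux
namespace OstAux


/-- partial derivative in the first variable -/
noncomputable def pd1 (f : ℝ → ℝ → ℝ) : ℝ → ℝ → ℝ :=
  fun x t => fderiv ℝ (Function.uncurry f) (x, t) (1, 0)

/-- partial derivative in the second variable -/
noncomputable def pd2 (f : ℝ → ℝ → ℝ) : ℝ → ℝ → ℝ :=
  fun x t => fderiv ℝ (Function.uncurry f) (x, t) (0, 1)

variable {f : ℝ → ℝ → ℝ}

theorem hasDerivAt_pd1 (hf : ContDiff ℝ (⊤ : ℕ∞) (Function.uncurry f)) (x t : ℝ) :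
    HasDerivAt (fun x' => f x' t) (pd1 f x t) x := by
  have h1 : HasDerivAt (fun x' : ℝ => ((x', t) : ℝ × ℝ)) (1, 0) x := by
    simpa using (hasDerivAt_id x).prodMk (hasDerivAt_const x t)
  have h2 : HasFDerivAt (Function.uncurry f) (fderiv ℝ (Function.uncurry f) (x, t)) (x, t) :=
    (hf.differentiable (by simp) (x, t)).hasFDerivAt
  exact h2.comp_hasDerivAt x h1

theorem hasDerivAt_pd2 (hf : ContDiff ℝ (⊤ : ℕ∞) (Function.uncurry f)) (x t : ℝ) :
    HasDerivAt (fun t' => f x t') (pd2 f x t) t := by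
  have h1 : HasDerivAt (fun t' : ℝ => ((x, t') : ℝ × ℝ)) (0, 1) t := by
    simpa using (hasDerivAt_const t x).prodMk (hasDerivAt_id t)
  have h2 : HasFDerivAt (Function.uncurry f) (fderiv ℝ (Function.uncurry f) (x, t)) (x, t) :=
    (hf.differentiable (by simp) (x, t)).hasFDerivAt
  exact h2.comp_hasDerivAt t h1

theorem deriv_pd1 (hf : ContDiff ℝ (⊤ : ℕ∞) (Function.uncurry f)) (x t : ℝ) :
    deriv (fun x' => f x' t) x = pd1 f x t := (hasDerivAt_pd1 hf x t).deriv

theorem deriv_pd2 (hf : ContDiff ℝ (⊤ : ℕ∞) (Function.uncurry f)) (x t : ℝ) :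
    deriv (fun t' => f x t') t = pd2 f x t := (hasDerivAt_pd2 hf x t).deriv

theorem contDiff_pd1 (hf : ContDiff ℝ (⊤ : ℕ∞) (Function.uncurry f)) :
    ContDiff ℝ (⊤ : ℕ∞) (Function.uncurry (pd1 f)) := by
  have : Function.uncurry (pd1 f) = fun p : ℝ × ℝ => fderiv ℝ (Function.uncurry f) p (1, 0) := by
    funext p; cases p; rfl
  rw [this]
  exact (hf.fderiv_right (by simp)).clm_apply contDiff_const

theorem contDiff_pd2 (hf : ContDiff ℝ (⊤ : ℕ∞) (Function.uncurry f)) :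
    ContDiff ℝ (⊤ : ℕ∞) (Function.uncurry (pd2 f)) := by
  have : Function.uncurry (pd2 f) = fun p : ℝ × ℝ => fderiv ℝ (Function.uncurry f) p (0, 1) := by
    funext p; cases p; rfl
  rw [this]
  exact (hf.fderiv_right (by simp)).clm_apply contDiff_const

/-- Clairaut's theorem in curried form. -/
theorem pd1_pd2_comm (hf : ContDiff ℝ (⊤ : ℕ∞) (Function.uncurry f)) :
    pd1 (pd2 f) = pd2 (pd1 f) := by
  funext x t
  set U := Function.uncurry f with hU
  have hdU : ∀ p, HasFDerivAt U (fderiv ℝ U p) p := fun p =>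
    (hf.differentiable (by simp) p).hasFDerivAt
  have hdfd : HasFDerivAt (fderiv ℝ U) (fderiv ℝ (fderiv ℝ U) (x, t)) (x, t) :=
    (((hf.fderiv_right (m := (⊤ : ℕ∞)) (by simp)).differentiable (by simp)) (x, t)).hasFDerivAt
  have hsymm := second_derivative_symmetric hdU hdfd (0, 1) (1, 0)
  -- compute pd1 (pd2 f) x t
  have e2 : Function.uncurry (pd2 f) = fun p : ℝ × ℝ => fderiv ℝ U p (0, 1) := by
    funext p; cases p; rfl
  have e1 : Function.uncurry (pd1 f) = fun p : ℝ × ℝ => fderiv ℝ U p (1, 0) := by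
    funext p; cases p; rfl
  have key : ∀ c d : ℝ × ℝ,
      fderiv ℝ (fun p : ℝ × ℝ => fderiv ℝ U p c) (x, t) d
        = fderiv ℝ (fderiv ℝ U) (x, t) d c := by
    intro c d
    have : HasFDerivAt (fun p : ℝ × ℝ => fderiv ℝ U p c)
        ((ContinuousLinearMap.apply ℝ ℝ c).comp (fderiv ℝ (fderiv ℝ U) (x, t))) (x, t) :=
      (ContinuousLinearMap.apply ℝ ℝ c).hasFDerivAt.comp (x, t) hdfd
    rw [this.fderiv]; rfl
  show fderiv ℝ (Function.uncurry (pd2 f)) (x, t) (1, 0)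
      = fderiv ℝ (Function.uncurry (pd1 f)) (x, t) (0, 1)
  rw [e1, e2, key, key]
  exact hsymm.symm



/-- locally-in-`t` uniform rapid decay bound -/
def DB (f : ℝ → ℝ → ℝ) (a b : ℝ) : Prop :=
  ∀ n : ℕ, ∃ C : ℝ, 0 ≤ C ∧ ∀ t ∈ Set.Icc a b, ∀ x : ℝ, |x| ^ n * |f x t| ≤ C

variable {f g : ℝ → ℝ → ℝ} {a b : ℝ}

theorem DB.of_bound (h : ∀ n : ℕ, ∃ C : ℝ, ∀ t ∈ Set.Icc a b, ∀ x : ℝ, |x| ^ n * |f x t| ≤ C) :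
    DB f a b := by
  intro n
  obtain ⟨C, hC⟩ := h n
  refine ⟨max C 0, le_max_right _ _, fun t ht x => (hC t ht x).trans (le_max_left _ _)⟩

theorem DB.add (hf : DB f a b) (hg : DB g a b) : DB (fun x t => f x t + g x t) a b := by
  intro n
  obtain ⟨C, hC0, hC⟩ := hf n
  obtain ⟨D, hD0, hD⟩ := hg n
  refine ⟨C + D, by positivity, fun t ht x => ?_⟩
  calc |x| ^ n * |f x t + g x t| ≤ |x| ^ n * (|f x t| + |g x t|) := by
        gcongr; exact abs_add_le _ _
    _ = |x| ^ n * |f x t| + |x| ^ n * |g x t| := by ring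
    _ ≤ C + D := add_le_add (hC t ht x) (hD t ht x)

theorem DB.mul (hf : DB f a b) (hg : DB g a b) : DB (fun x t => f x t * g x t) a b := by
  intro n
  obtain ⟨C, hC0, hC⟩ := hf n
  obtain ⟨D, hD0, hD⟩ := hg 0
  refine ⟨C * D, by positivity, fun t ht x => ?_⟩
  have h1 : |g x t| ≤ D := by simpa using hD t ht x
  calc |x| ^ n * |f x t * g x t| = (|x| ^ n * |f x t|) * |g x t| := by
        rw [abs_mul]; ring
    _ ≤ C * D := mul_le_mul (hC t ht x) h1 (abs_nonneg _) hC0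

theorem DB.const_mul (hf : DB f a b) (c : ℝ) : DB (fun x t => c * f x t) a b := by
  intro n
  obtain ⟨C, hC0, hC⟩ := hf n
  refine ⟨|c| * C, by positivity, fun t ht x => ?_⟩
  calc |x| ^ n * |c * f x t| = |c| * (|x| ^ n * |f x t|) := by rw [abs_mul]; ring
    _ ≤ |c| * C := by gcongr; exact hC t ht x

theorem DB.neg (hf : DB f a b) : DB (fun x t => -f x t) a b := by
  simpa using hf.const_mul (-1)

theorem DB.sub (hf : DB f a b) (hg : DB g a b) : DB (fun x t => f x t - g x t) a b := by
  simpa [sub_eq_add_neg] using hf.add hg.neg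

theorem DB.congr (hf : DB f a b) (h : ∀ x t, f x t = g x t) : DB g a b := by
  intro n; obtain ⟨C, hC0, hC⟩ := hf n
  exact ⟨C, hC0, fun t ht x => by rw [← h]; exact hC t ht x⟩

/-- a pointwise bound `C / (1 + x²)`, uniform for `t ∈ Icc a b`. -/
theorem DB.bound (hf : DB f a b) :
    ∃ C : ℝ, 0 ≤ C ∧ ∀ t ∈ Set.Icc a b, ∀ x : ℝ, |f x t| ≤ C * (1 + x ^ 2)⁻¹ := by
  obtain ⟨C₀, hC₀0, hC₀⟩ := hf 0
  obtain ⟨C₂, hC₂0, hC₂⟩ := hf 2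
  refine ⟨C₀ + C₂, by positivity, fun t ht x => ?_⟩
  have h0 : |f x t| ≤ C₀ := by simpa using hC₀ t ht x
  have h2 : x ^ 2 * |f x t| ≤ C₂ := by simpa [sq_abs] using hC₂ t ht x
  have hpos : (0:ℝ) < 1 + x ^ 2 := by positivity
  rw [← div_eq_mul_inv, le_div_iff₀ hpos]
  nlinarith [abs_nonneg (f x t)]

/-- integrability in `x`, for each `t ∈ Icc a b` -/
theorem DB.integrable (hf : DB f a b) (hc : ∀ t, Continuous fun x => f x t)
    {t : ℝ} (ht : t ∈ Set.Icc a b) : Integrable (fun x => f x t) := by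
  obtain ⟨C, hC0, hC⟩ := hf.bound
  refine Integrable.mono' (integrable_inv_one_add_sq.const_mul C)
    (hc t).aestronglyMeasurable ?_
  filter_upwards with x
  simpa [Real.norm_eq_abs] using hC t ht x

theorem DB.tendsto_atTop (hf : DB f a b) {t : ℝ} (ht : t ∈ Set.Icc a b) :
    Tendsto (fun x => f x t) atTop (nhds 0) := by
  obtain ⟨C, hC0, hC⟩ := hf.bound
  have hb : Tendsto (fun x : ℝ => C * (1 + x ^ 2)⁻¹) atTop (nhds 0) := by
    have h2 : Tendsto (fun x : ℝ => 1 + x ^ 2) atTop atTop :=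
      tendsto_atTop_add_const_left _ 1 (tendsto_pow_atTop (by norm_num : (2:ℕ) ≠ 0))
    have := (tendsto_inv_atTop_zero.comp h2).const_mul C
    simpa using this
  refine squeeze_zero_norm (fun x => ?_) hb
  simpa [Real.norm_eq_abs] using hC t ht x

theorem DB.tendsto_atBot (hf : DB f a b) {t : ℝ} (ht : t ∈ Set.Icc a b) :
    Tendsto (fun x => f x t) atBot (nhds 0) := by
  obtain ⟨C, hC0, hC⟩ := hf.bound
  have h2 : Tendsto (fun x : ℝ => 1 + x ^ 2) atBot atTop := by
    have : Tendsto (fun x : ℝ => x ^ 2) atBot atTop := by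
      have h1 : Tendsto (fun x : ℝ => x ^ 2) atTop atTop :=
        tendsto_pow_atTop (by norm_num : (2:ℕ) ≠ 0)
      have hcomp := h1.comp (tendsto_neg_atBot_atTop : Tendsto (fun x : ℝ => -x) atBot atTop)
      have he : ((fun x : ℝ => x ^ 2) ∘ fun x : ℝ => -x) = fun x : ℝ => x ^ 2 := by
        funext x; simp [Function.comp, neg_pow]
      rwa [he] at hcomp
    exact tendsto_atTop_add_const_left _ 1 this
  have hb : Tendsto (fun x : ℝ => C * (1 + x ^ 2)⁻¹) atBot (nhds 0) := by
    have := (tendsto_inv_atTop_zero.comp h2).const_mul C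
    simpa using this
  refine squeeze_zero_norm (fun x => ?_) hb
  simpa [Real.norm_eq_abs] using hC t ht x



theorem integral_deriv_eq_zero {g g' : ℝ → ℝ} (hd : ∀ x, HasDerivAt g (g' x) x)
    (hint : Integrable g') (htop : Tendsto g atTop (nhds 0))
    (hbot : Tendsto g atBot (nhds 0)) : ∫ x, g' x = 0 := by
  have h1 : ∫ x in Iic (0:ℝ), g' x = g 0 - 0 :=
    integral_Iic_of_hasDerivAt_of_tendsto' (fun x _ => hd x) hint.integrableOn hbot
  have h2 : ∫ x in Ioi (0:ℝ), g' x = 0 - g 0 :=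
    integral_Ioi_of_hasDerivAt_of_tendsto' (fun x _ => hd x) hint.integrableOn htop
  have := intervalIntegral.integral_Iic_add_Ioi (b := (0:ℝ)) hint.integrableOn hint.integrableOn
  rw [h1, h2] at this
  linarith [this.symm]



theorem cont_curry {f : ℝ → ℝ → ℝ} (hf : ContDiff ℝ (⊤ : ℕ∞) (Function.uncurry f)) (t : ℝ) :
    Continuous fun x => f x t :=
  hf.continuous.comp (continuous_id.prodMk continuous_const)

section atoms
variable {f : ℝ → ℝ → ℝ} (hf : ContDiff ℝ (⊤ : ℕ∞) (Function.uncurry f))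
  (hd : RapidlyDecayingInX f) (a b : ℝ)

include hd in
theorem rd_db (i j : ℕ) :
    DB (fun x t => iteratedDeriv i (fun x' => iteratedDeriv j (f x') t) x) a b :=
  DB.of_bound fun n => hd i j n a b

include hd in
theorem db_self : DB f a b :=
  (rd_db hd a b 0 0).congr (fun x t => by simp)

include hf hd in
theorem db_pd1 : DB (pd1 f) a b :=
  (rd_db hd a b 1 0).congr (fun x t => by
    simp only [iteratedDeriv_one, iteratedDeriv_zero]
    exact deriv_pd1 hf x t)

include hf hd in
theorem db_pd1_pd1 : DB (pd1 (pd1 f)) a b :=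
  (rd_db hd a b 2 0).congr (fun x t => by
    have e : deriv (fun x' => f x' t) = fun x => pd1 f x t := funext fun x => deriv_pd1 hf x t
    simp only [iteratedDeriv_zero, iteratedDeriv_succ, iteratedDeriv_one, e]
    exact deriv_pd1 (contDiff_pd1 hf) x t)

include hf hd in
theorem db_pd1_pd1_pd1 : DB (pd1 (pd1 (pd1 f))) a b :=
  (rd_db hd a b 3 0).congr (fun x t => by
    have e : deriv (fun x' => f x' t) = fun x => pd1 f x t := funext fun x => deriv_pd1 hf x t
    have e2 : deriv (fun x => pd1 f x t) = fun x => pd1 (pd1 f) x t :=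
      funext fun x => deriv_pd1 (contDiff_pd1 hf) x t
    simp only [iteratedDeriv_zero, iteratedDeriv_succ, iteratedDeriv_one, e, e2]
    exact deriv_pd1 (contDiff_pd1 (contDiff_pd1 hf)) x t)

include hf hd in
theorem db_pd2 : DB (pd2 f) a b :=
  (rd_db hd a b 0 1).congr (fun x t => by
    simp only [iteratedDeriv_one, iteratedDeriv_zero]
    exact deriv_pd2 hf x t)

include hf hd in
theorem db_pd2_pd1 : DB (pd2 (pd1 f)) a b :=
  (rd_db hd a b 1 1).congr (fun x t => by
    have e : (fun x' => deriv (f x') t) = fun x' => pd2 f x' t :=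
      funext fun x' => deriv_pd2 hf x' t
    simp only [iteratedDeriv_one, e]
    rw [deriv_pd1 (contDiff_pd2 hf) x t, ← pd1_pd2_comm hf])

end atoms



theorem hasDerivAt_integral {F F' : ℝ → ℝ → ℝ} {t₀ : ℝ}
    (hF : ∀ x t, HasDerivAt (fun t' => F x t') (F' x t) t)
    (hFc : ∀ t, Continuous fun x => F x t) (hF'c : ∀ t, Continuous fun x => F' x t)
    (hdbF : DB F (t₀ - 1) (t₀ + 1)) (hdbF' : DB F' (t₀ - 1) (t₀ + 1)) :
    Integrable (fun x => F' x t₀) ∧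
      HasDerivAt (fun t => ∫ x, F x t) (∫ x, F' x t₀) t₀ := by
  obtain ⟨C, hC0, hC⟩ := hdbF'.bound
  have ht₀ : t₀ ∈ Set.Icc (t₀ - 1) (t₀ + 1) := by constructor <;> linarith
  have hball : ∀ t ∈ Metric.ball t₀ 1, t ∈ Set.Icc (t₀ - 1) (t₀ + 1) := by
    intro t ht
    have := Metric.mem_ball.mp ht
    rw [Real.dist_eq] at this
    constructor <;> [linarith [abs_lt.mp this]; linarith [abs_lt.mp this]]
  exact hasDerivAt_integral_of_dominated_loc_of_deriv_le (F := fun t x => F x t)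
    (F' := fun t x => F' x t) (bound := fun x => C * (1 + x ^ 2)⁻¹) (Metric.ball_mem_nhds t₀ one_pos)
    (Eventually.of_forall fun t => (hFc t).aestronglyMeasurable)
    (hdbF.integrable hFc ht₀)
    ((hF'c t₀).aestronglyMeasurable)
    (ae_of_all _ fun x t ht => by
      simpa [Real.norm_eq_abs] using hC t (hball t ht) x)
    ((integrable_inv_one_add_sq).const_mul C)
    (ae_of_all _ fun x t ht => hF x t)



theorem main (γ : ℝ) (u v w : ℝ → ℝ → ℝ)
    (husmooth : ContDiff ℝ (⊤ : ℕ∞) (Function.uncurry u))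
    (hvsmooth : ContDiff ℝ (⊤ : ℕ∞) (Function.uncurry v))
    (hwsmooth : ContDiff ℝ (⊤ : ℕ∞) (Function.uncurry w))
    (hudecay : RapidlyDecayingInX u)
    (hvdecay : RapidlyDecayingInX v)
    (hwdecay : RapidlyDecayingInX w)
    (hvx' : ∀ x t : ℝ, pd1 v x t = u x t)
    (hwx' : ∀ x t : ℝ, pd1 w x t = v x t)
    (host : ∀ x t : ℝ,
      pd2 u x t = -(pd1 (pd1 (pd1 u)) x t) + 6 * u x t * pd1 u x t + γ * v x t) :
    ∀ t₁ t₂ : ℝ,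
      -(1 / 2) * (∫ x : ℝ, (pd1 u x t₁ ^ 2 + 2 * u x t₁ ^ 3))
          + (γ / 2) * (∫ x : ℝ, v x t₁ ^ 2)
        = -(1 / 2) * (∫ x : ℝ, (pd1 u x t₂ ^ 2 + 2 * u x t₂ ^ 3))
          + (γ / 2) * (∫ x : ℝ, v x t₂ ^ 2) := by
  intro t₁ t₂
  have hclair_u := pd1_pd2_comm husmooth
  have hclair_v := pd1_pd2_comm hvsmooth
  have hux_s : ContDiff ℝ (⊤ : ℕ∞) (Function.uncurry (pd1 u)) := contDiff_pd1 husmooth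
  have huxx_s : ContDiff ℝ (⊤ : ℕ∞) (Function.uncurry (pd1 (pd1 u))) := contDiff_pd1 hux_s
  have hut_s : ContDiff ℝ (⊤ : ℕ∞) (Function.uncurry (pd2 u)) := contDiff_pd2 husmooth
  have huxt_s : ContDiff ℝ (⊤ : ℕ∞) (Function.uncurry (pd2 (pd1 u))) := contDiff_pd2 hux_s
  have hvt_s : ContDiff ℝ (⊤ : ℕ∞) (Function.uncurry (pd2 v)) := contDiff_pd2 hvsmooth
  set q : ℝ → ℝ → ℝ := fun x t => -(pd1 (pd1 u) x t) + 3 * u x t ^ 2 + γ * w x t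
    with hq_def
  -- the x-derivative of q is u_t
  have hq_x : ∀ x t : ℝ, HasDerivAt (fun x' => q x' t) (pd2 u x t) x := by
    intro x t
    have h1 := hasDerivAt_pd1 huxx_s x t
    have h2 := hasDerivAt_pd1 husmooth x t
    have h3 : HasDerivAt (fun x' => w x' t) (v x t) x := by
      have := hasDerivAt_pd1 hwsmooth x t
      rwa [hwx' x t] at this
    have hsum := (h1.neg.add ((h2.pow 2).const_mul 3)).add (h3.const_mul γ)
    have : HasDerivAt (fun x' => q x' t)
        (-(pd1 (pd1 (pd1 u)) x t) + 3 * (2 * u x t ^ 1 * pd1 u x t) + γ * v x t) x := by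
      simp only [hq_def]
      exact hsum.congr_deriv (by norm_num)
    convert this using 1
    rw [host x t]; ring
  -- smoothness of q
  have hq_s : ContDiff ℝ (⊤ : ℕ∞) (Function.uncurry q) := by
    have : Function.uncurry q = fun p : ℝ × ℝ =>
        -(Function.uncurry (pd1 (pd1 u)) p) + 3 * (Function.uncurry u p) ^ 2
          + γ * Function.uncurry w p := by
      funext p; cases p; simp [hq_def, Function.uncurry]
    rw [this]
    exact (huxx_s.neg.add (contDiff_const.mul (husmooth.pow 2))).add (contDiff_const.mul hwsmooth)
  -- v_t = q
  have hvt_q : ∀ x t : ℝ, pd2 v x t = q x t := by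
    intro x t
    set h : ℝ → ℝ := fun y => pd2 v y t - q y t with hh_def
    have hd0 : ∀ y, HasDerivAt h 0 y := by
      intro y
      have h1 := hasDerivAt_pd1 hvt_s y t
      have e : pd1 (pd2 v) y t = pd2 u y t := by
        rw [hclair_v]
        have : pd1 v = u := funext fun a => funext fun b => hvx' a b
        rw [this]
      rw [e] at h1
      have := h1.sub (hq_x y t)
      rw [sub_self] at this; exact this
    have hconst : ∀ y, h y = h 0 := fun y =>
      is_const_of_deriv_eq_zero (fun z => (hd0 z).differentiableAt) (fun z => (hd0 z).deriv) y 0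
    have hdbq : DB q t t := by
      have := (((db_pd1_pd1 husmooth hudecay t t).neg).add
        (((db_self hudecay t t).mul (db_self hudecay t t)).const_mul 3)).add
        ((db_self hwdecay t t).const_mul γ)
      exact this.congr (fun x s => by simp only [hq_def]; ring)
    have hdb : DB (fun y s => pd2 v y s - q y s) t t :=
      (db_pd2 hvsmooth hvdecay t t).sub hdbq
    have htend : Tendsto h atTop (nhds 0) := by
      have := hdb.tendsto_atTop (t := t) ⟨le_rfl, le_rfl⟩
      simpa [hh_def] using this
    have htend' : Tendsto h atTop (nhds (h 0)) :=
      tendsto_const_nhds.congr fun y => (hconst y).symm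
    have h00 : h 0 = 0 := tendsto_nhds_unique htend' htend
    have : h x = 0 := (hconst x).trans h00
    simpa [hh_def, sub_eq_zero] using this
  -- the conserved functional
  set H : ℝ → ℝ := fun t =>
    -(1 / 2) * (∫ x : ℝ, (pd1 u x t ^ 2 + 2 * u x t ^ 3))
      + (γ / 2) * (∫ x : ℝ, v x t ^ 2) with hH_def
  have key : ∀ t₀ : ℝ, HasDerivAt H 0 t₀ := by
    intro t₀
    -- decay bounds on [t₀-1, t₀+1]
    have dbu := db_self hudecay (t₀ - 1) (t₀ + 1)
    have dbux := db_pd1 husmooth hudecay (t₀ - 1) (t₀ + 1)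
    have dbuxx := db_pd1_pd1 husmooth hudecay (t₀ - 1) (t₀ + 1)
    have dbut := db_pd2 husmooth hudecay (t₀ - 1) (t₀ + 1)
    have dbuxt := db_pd2_pd1 husmooth hudecay (t₀ - 1) (t₀ + 1)
    have dbv := db_self hvdecay (t₀ - 1) (t₀ + 1)
    have dbvt := db_pd2 hvsmooth hvdecay (t₀ - 1) (t₀ + 1)
    have dbw := db_self hwdecay (t₀ - 1) (t₀ + 1)
    have dbq : DB q (t₀ - 1) (t₀ + 1) := by
      have := ((dbuxx.neg).add ((dbu.mul dbu).const_mul 3)).add (dbw.const_mul γ)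
      exact this.congr (fun x s => by simp only [hq_def]; ring)
    -- integrands and their t-derivatives
    set A : ℝ → ℝ → ℝ := fun x t => pd1 u x t ^ 2 + 2 * u x t ^ 3 with hA_def
    set A' : ℝ → ℝ → ℝ := fun x t =>
      2 * pd1 u x t * pd2 (pd1 u) x t + 6 * u x t ^ 2 * pd2 u x t with hA'_def
    set B : ℝ → ℝ → ℝ := fun x t => v x t ^ 2 with hB_def
    set B' : ℝ → ℝ → ℝ := fun x t => 2 * v x t * pd2 v x t with hB'_def
    have hA : ∀ x t : ℝ, HasDerivAt (fun t' => A x t') (A' x t) t := by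
      intro x t
      have h1 := (hasDerivAt_pd2 hux_s x t).pow 2
      have h2 := ((hasDerivAt_pd2 husmooth x t).pow 3).const_mul 2
      have := h1.add h2
      have goal : HasDerivAt (fun t' => A x t')
          (2 * pd1 u x t ^ 1 * pd2 (pd1 u) x t + 2 * (3 * u x t ^ 2 * pd2 u x t)) t := by
        simp only [hA_def]; exact this.congr_deriv (by norm_num)
      convert goal using 1
      simp only [hA'_def]; ring
    have hB : ∀ x t : ℝ, HasDerivAt (fun t' => B x t') (B' x t) t := by
      intro x t
      have h1 := (hasDerivAt_pd2 hvsmooth x t).pow 2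
      have goal : HasDerivAt (fun t' => B x t') (2 * v x t ^ 1 * pd2 v x t) t := by
        simp only [hB_def]; exact h1.congr_deriv (by norm_num)
      convert goal using 1
      simp only [hB'_def]; ring
    have hAc : ∀ t, Continuous fun x => A x t := fun t => by
      simp only [hA_def]
      exact ((cont_curry hux_s t).pow 2).add (continuous_const.mul ((cont_curry husmooth t).pow 3))
    have hA'c : ∀ t, Continuous fun x => A' x t := fun t => by
      simp only [hA'_def]
      exact ((continuous_const.mul (cont_curry hux_s t)).mul (cont_curry huxt_s t)).add
        ((continuous_const.mul ((cont_curry husmooth t).pow 2)).mul (cont_curry hut_s t))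
    have hBc : ∀ t, Continuous fun x => B x t := fun t => by
      simp only [hB_def]; exact (cont_curry hvsmooth t).pow 2
    have hB'c : ∀ t, Continuous fun x => B' x t := fun t => by
      simp only [hB'_def]
      exact ((continuous_const.mul (cont_curry hvsmooth t))).mul (cont_curry hvt_s t)
    have dbA : DB A (t₀ - 1) (t₀ + 1) :=
      ((dbux.mul dbux).add (((dbu.mul dbu).mul dbu).const_mul 2)).congr
        (fun x s => by simp only [hA_def]; ring)
    have dbA' : DB A' (t₀ - 1) (t₀ + 1) :=
      (((dbux.mul dbuxt).const_mul 2).add (((dbu.mul dbu).mul dbut).const_mul 6)).congr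
        (fun x s => by simp only [hA'_def]; ring)
    have dbB : DB B (t₀ - 1) (t₀ + 1) :=
      (dbv.mul dbv).congr (fun x s => by simp only [hB_def]; ring)
    have dbB' : DB B' (t₀ - 1) (t₀ + 1) :=
      ((dbv.mul dbvt).const_mul 2).congr (fun x s => by simp only [hB'_def]; ring)
    have hIA := hasDerivAt_integral hA hAc hA'c dbA dbA'
    have hIB := hasDerivAt_integral hB hBc hB'c dbB dbB'
    have hH' : HasDerivAt H
        (-(1 / 2) * (∫ x : ℝ, A' x t₀) + (γ / 2) * (∫ x : ℝ, B' x t₀)) t₀ := by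
      simp only [hH_def]
      exact (hIA.2.const_mul (-(1 / 2))).add (hIB.2.const_mul (γ / 2))
    have hzero : -(1 / 2) * (∫ x : ℝ, A' x t₀) + (γ / 2) * (∫ x : ℝ, B' x t₀) = 0 := by
      rw [← integral_const_mul, ← integral_const_mul,
        ← integral_add (hIA.1.const_mul _) (hIB.1.const_mul _)]
      -- the integrand is an exact x-derivative of Φ
      set Φ : ℝ → ℝ := fun x =>
        -(pd1 u x t₀ * pd2 u x t₀) - q x t₀ ^ 2 / 2 + γ * (w x t₀ * q x t₀) with hΦ_def
      have hΦd : ∀ x : ℝ,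
          HasDerivAt Φ (-(1 / 2) * A' x t₀ + γ / 2 * B' x t₀) x := by
        intro x
        have h1 := hasDerivAt_pd1 hux_s x t₀
        have h2 : HasDerivAt (fun x' => pd2 u x' t₀) (pd2 (pd1 u) x t₀) x := by
          have := hasDerivAt_pd1 hut_s x t₀
          rwa [hclair_u] at this
        have h3 := hq_x x t₀
        have h4 : HasDerivAt (fun x' => w x' t₀) (v x t₀) x := by
          have := hasDerivAt_pd1 hwsmooth x t₀
          rwa [hwx' x t₀] at this
        have hsum := (((h1.mul h2).neg).sub ((h3.pow 2).div_const 2)).add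
          ((h4.mul h3).const_mul γ)
        have goal : HasDerivAt Φ
            (-(pd1 (pd1 u) x t₀ * pd2 u x t₀ + pd1 u x t₀ * pd2 (pd1 u) x t₀)
              - 2 * q x t₀ ^ 1 * pd2 u x t₀ / 2
              + γ * (v x t₀ * q x t₀ + w x t₀ * pd2 u x t₀)) x := by
          simp only [hΦ_def]; exact hsum.congr_deriv (by norm_num)
        convert goal using 1
        simp only [hA'_def, hB'_def]
        rw [hvt_q x t₀]
        simp only [hq_def]
        ring
      have hEint : Integrable (fun x => -(1 / 2) * A' x t₀ + γ / 2 * B' x t₀) :=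
        (hIA.1.const_mul _).add (hIB.1.const_mul _)
      have ht₀mem : t₀ ∈ Set.Icc (t₀ - 1) (t₀ + 1) := by constructor <;> linarith
      have dbΦ : DB (fun x t => -(pd1 u x t * pd2 u x t) - q x t ^ 2 / 2
          + γ * (w x t * q x t)) (t₀ - 1) (t₀ + 1) :=
        ((((dbux.mul dbut).neg).sub ((dbq.mul dbq).const_mul (1 / 2))).add
          ((dbw.mul dbq).const_mul γ)).congr (fun x s => by ring)
      have htop : Tendsto Φ atTop (nhds 0) := by
        have := dbΦ.tendsto_atTop ht₀mem
        simpa [hΦ_def] using this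
      have hbot : Tendsto Φ atBot (nhds 0) := by
        have := dbΦ.tendsto_atBot ht₀mem
        simpa [hΦ_def] using this
      exact integral_deriv_eq_zero hΦd hEint htop hbot
    rw [hzero] at hH'
    exact hH'
  exact is_const_of_deriv_eq_zero (fun t => (key t).differentiableAt)
    (fun t => (key t).deriv) t₁ t₂

end OstAux
end OstAux

/-- For smooth, rapidly decaying `u, v, w` with `v_x = u`, `w_x = v` and
`u` solving the Ostrovsky equation `u_t + u_{xxx} − 6uu_x = γv`, the modified Hamiltonian
`t ↦ −(1/2)∫_ℝ (u_x² + 2u³) dx + (γ/2)∫_ℝ v² dx` is constant. -/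
theorem ostrovsky_modified_hamiltonian_conserved (γ : ℝ) (u v w : ℝ → ℝ → ℝ)
    (husmooth : ContDiff ℝ (⊤ : ℕ∞) (Function.uncurry u))
    (hvsmooth : ContDiff ℝ (⊤ : ℕ∞) (Function.uncurry v))
    (hwsmooth : ContDiff ℝ (⊤ : ℕ∞) (Function.uncurry w))
    (hudecay : RapidlyDecayingInX u)
    (hvdecay : RapidlyDecayingInX v)
    (hwdecay : RapidlyDecayingInX w)
    (hvx : ∀ x t : ℝ, deriv (fun x' => v x' t) x = u x t)
    (hwx : ∀ x t : ℝ, deriv (fun x' => w x' t) x = v x t)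
    (hostrovsky : ∀ x t : ℝ,
      deriv (fun t' => u x t') t
        + deriv (deriv (deriv (fun x' => u x' t))) x
        - 6 * u x t * deriv (fun x' => u x' t) x = γ * v x t) :
    ∀ t₁ t₂ : ℝ,
      -(1 / 2) * (∫ x : ℝ, ((deriv (fun x' => u x' t₁) x) ^ 2 + 2 * (u x t₁) ^ 3))
          + (γ / 2) * (∫ x : ℝ, (v x t₁) ^ 2)
        = -(1 / 2) * (∫ x : ℝ, ((deriv (fun x' => u x' t₂) x) ^ 2 + 2 * (u x t₂) ^ 3))
          + (γ / 2) * (∫ x : ℝ, (v x t₂) ^ 2) := by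
  have hux_s := OstAux.contDiff_pd1 husmooth
  have huxx_s := OstAux.contDiff_pd1 hux_s
  have edu : ∀ t, deriv (fun x' => u x' t) = fun x => OstAux.pd1 u x t :=
    fun t => funext fun x => OstAux.deriv_pd1 husmooth x t
  have edux : ∀ t, deriv (fun x => OstAux.pd1 u x t)
      = fun x => OstAux.pd1 (OstAux.pd1 u) x t :=
    fun t => funext fun x => OstAux.deriv_pd1 hux_s x t
  have eduxx : ∀ t, deriv (fun x => OstAux.pd1 (OstAux.pd1 u) x t)
      = fun x => OstAux.pd1 (OstAux.pd1 (OstAux.pd1 u)) x t :=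
    fun t => funext fun x => OstAux.deriv_pd1 huxx_s x t
  have hvx' : ∀ x t : ℝ, OstAux.pd1 v x t = u x t := fun x t =>
    (OstAux.deriv_pd1 hvsmooth x t).symm.trans (hvx x t)
  have hwx' : ∀ x t : ℝ, OstAux.pd1 w x t = v x t := fun x t =>
    (OstAux.deriv_pd1 hwsmooth x t).symm.trans (hwx x t)
  have host : ∀ x t : ℝ,
      OstAux.pd2 u x t = -(OstAux.pd1 (OstAux.pd1 (OstAux.pd1 u)) x t)
        + 6 * u x t * OstAux.pd1 u x t + γ * v x t := by
    intro x t
    have h := hostrovsky x t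
    rw [edu t, edux t, eduxx t, OstAux.deriv_pd2 husmooth x t] at h
    linarith
  intro t₁ t₂
  simp only [edu]
  exact OstAux.main γ u v w husmooth hvsmooth hwsmooth hudecay hvdecay hwdecay
    hvx' hwx' host t₁ t₂
end

section
/- The function g : ℝ → ℝ defined by g(z) = (coth z − sgn z)(z + (1/2)sinh(2z)) sech²(z) for z ≠ 0 and g(0) = 2 is continuous and Lebesgue integrable on ℝ, and ∫_ℝ g(z) dz = π²/4. -/
/-!
For `z ≠ 0` one has `coth z - sgn z = e^{-|z|} / sinh z`, so `g z = G |z|` with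
`G x = e^{-x} (x / sinh x + cosh x) / cosh² x`, where `x / sinh x` is continued by `1` at `0`.
Hence `g` is continuous, and `0 ≤ G x ≤ 2 e^{-x}` gives integrability.

With `t = tanh x`, for `x > 0` we have `G x = (1 - t) + x (1 - t)(1 - t²) / t`. Expanding
`1 / (1 - t²) = ∑ t^{2k}` and `x = artanh t = ∑ t^{2k+1} / (2k+1)` gives
`G x = ∑ (2k+2)/(2k+1) (t^{2k} - t^{2k+1}) sech² x`, and since
`∫₀^∞ tanh^m x sech² x dx = 1/(m+1)` the `k`-th term integrates to `1 / (2k+1)²`.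
Summing the nonnegative terms gives `∫₀^∞ G = π² / 8`, and evenness doubles it.
-/

open MeasureTheory Filter Set Topology

namespace Real

theorem tanh_nonneg {x : ℝ} (hx : 0 ≤ x) : 0 ≤ tanh x := by
  rw [tanh_eq_sinh_div_cosh]
  exact div_nonneg (sinh_nonneg_iff.mpr hx) (cosh_pos x).le

theorem hasDerivAt_tanh (x : ℝ) : HasDerivAt tanh (1 / cosh x ^ 2) x := by
  have h := (hasDerivAt_sinh x).div (hasDerivAt_cosh x) (cosh_pos x).ne'
  rw [← sq, ← sq, cosh_sq_sub_sinh_sq] at h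
  exact h.congr_of_eventuallyEq (.of_forall fun y => tanh_eq_sinh_div_cosh y)

theorem one_sub_tanh (x : ℝ) : 1 - tanh x = 2 / (exp (2 * x) + 1) := by
  rw [tanh_eq_sinh_div_cosh, sinh_eq, cosh_eq, exp_neg,
    show exp (2 * x) = exp x ^ 2 by rw [← exp_nat_mul]; norm_num]
  have := exp_pos x
  field_simp
  ring

theorem tendsto_tanh_atTop : Tendsto tanh atTop (𝓝 1) := by
  have h : Tendsto (fun x => 2 / (exp (2 * x) + 1)) atTop (𝓝 0) :=
    tendsto_const_nhds.div_atTop <| tendsto_atTop_add_const_right _ _ <|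
      tendsto_exp_atTop.comp (tendsto_id.const_mul_atTop two_pos)
  simpa [← one_sub_tanh] using (tendsto_const_nhds (x := (1 : ℝ))).sub h

theorem hasSum_tanh_pow_div (x : ℝ) :
    HasSum (fun k : ℕ => tanh x ^ (2 * k + 1) / (2 * k + 1)) x := by
  have hlog : log (1 + tanh x) - log (1 - tanh x) = 2 * x := by
    have h := artanh_eq_half_log (Ioo_subset_Icc_self ⟨neg_one_lt_tanh x, tanh_lt_one x⟩)
    rw [artanh_tanh, log_div (by linarith [neg_one_lt_tanh x]) (by linarith [tanh_lt_one x])] at h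
    linarith
  have h := (hasSum_log_sub_log_of_abs_lt_one (abs_tanh_lt_one x)).div_const 2
  rw [hlog, mul_div_cancel_left₀ x two_ne_zero] at h
  exact h.congr_fun fun k => by ring

theorem hasDerivAt_tanh_pow_succ_div (m : ℕ) (x : ℝ) :
    HasDerivAt (fun y => tanh y ^ (m + 1) / (m + 1)) (tanh x ^ m / cosh x ^ 2) x := by
  refine (((hasDerivAt_tanh x).fun_pow (m + 1)).div_const ((m : ℝ) + 1)).congr_deriv ?_
  push_cast
  field_simp

theorem tanh_pow_div_cosh_sq_nonneg (m : ℕ) {x : ℝ} (hx : 0 ≤ x) :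
    0 ≤ tanh x ^ m / cosh x ^ 2 :=
  div_nonneg (pow_nonneg (tanh_nonneg hx) m) (sq_nonneg _)

theorem tendsto_tanh_pow_succ_div (m : ℕ) :
    Tendsto (fun y => tanh y ^ (m + 1) / (m + 1)) atTop (𝓝 (1 / (m + 1))) := by
  simpa using (tendsto_tanh_atTop.pow (m + 1)).div_const ((m : ℝ) + 1)

theorem integrableOn_tanh_pow_div_cosh_sq (m : ℕ) :
    IntegrableOn (fun x => tanh x ^ m / cosh x ^ 2) (Ioi 0) :=
  integrableOn_Ioi_deriv_of_nonneg' (fun x _ => hasDerivAt_tanh_pow_succ_div m x)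
    (fun _ hx => tanh_pow_div_cosh_sq_nonneg m (le_of_lt hx)) (tendsto_tanh_pow_succ_div m)

theorem integral_tanh_pow_div_cosh_sq (m : ℕ) :
    ∫ x in Ioi 0, tanh x ^ m / cosh x ^ 2 = 1 / (m + 1) := by
  rw [integral_Ioi_of_hasDerivAt_of_nonneg' (fun x _ => hasDerivAt_tanh_pow_succ_div m x)
    (fun _ hx => tanh_pow_div_cosh_sq_nonneg m (le_of_lt hx)) (tendsto_tanh_pow_succ_div m)]
  simp

theorem one_le_dslope_sinh_zero (x : ℝ) : 1 ≤ dslope sinh 0 x := by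
  rcases lt_trichotomy x 0 with hx | rfl | hx
  · rw [dslope_of_ne _ hx.ne, slope_def_field, sub_zero, sinh_zero, sub_zero,
      le_div_iff_of_neg hx, one_mul]
    exact sinh_le_self_iff.mpr hx.le
  · simp [dslope_same]
  · rw [dslope_of_ne _ hx.ne', slope_def_field, sub_zero, sinh_zero, sub_zero,
      le_div_iff₀ hx, one_mul]
    exact self_le_sinh_iff.mpr hx.le

theorem continuous_dslope_sinh_zero : Continuous (dslope sinh 0) :=
  continuousOn_univ.mp <| (continuousOn_dslope univ_mem).mpr
    ⟨continuous_sinh.continuousOn, differentiable_sinh 0⟩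

end Real

theorem hasSum_one_div_odd_sq :
    HasSum (fun k : ℕ => 1 / (2 * (k : ℝ) + 1) ^ 2) (Real.pi ^ 2 / 8) := by
  set f : ℕ → ℝ := fun n => 1 / (n : ℝ) ^ 2
  have hf : HasSum f (Real.pi ^ 2 / 6) := hasSum_zeta_two
  have heven : HasSum (fun k => f (2 * k)) (1 / 4 * (Real.pi ^ 2 / 6)) := by
    rw [show (fun k => f (2 * k)) = fun k => 1 / 4 * f k by ext k; push_cast [f]; ring]
    exact hf.mul_left _
  obtain ⟨S, hodd⟩ : Summable fun k => f (2 * k + 1) :=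
    hf.summable.comp_injective fun a b h => by simpa using h
  have hS : S = Real.pi ^ 2 / 8 := by linarith [(heven.even_add_odd hodd).unique hf]
  subst hS
  convert hodd using 2 with k
  push_cast [f]
  rfl

theorem integrable_comp_abs_of_integrableOn_Ioi {E : Type*} [NormedAddCommGroup E] {f : ℝ → E}
    (hf : IntegrableOn f (Ioi 0)) :
    Integrable fun x => f |x| := by
  have hIoi : IntegrableOn (fun x => f |x|) (Ioi 0) :=
    hf.congr_fun (fun x hx => by rw [abs_of_pos (mem_Ioi.mp hx)]) measurableSet_Ioi
  have hIic : IntegrableOn (fun x => f |x|) (Iic 0) := by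
    have hneg : MeasurableEmbedding fun x : ℝ => -x := (Homeomorph.neg ℝ).measurableEmbedding
    rw [← Measure.map_neg_eq_self (volume : Measure ℝ), hneg.integrableOn_map_iff]
    simp_rw [Function.comp_def, abs_neg, neg_preimage, neg_Iic, neg_zero]
    exact (integrableOn_Ici_iff_integrableOn_Ioi (by simp)).2 hIoi
  rw [← integrableOn_univ, ← Iic_union_Ioi (a := (0 : ℝ))]
  exact hIic.union hIoi

namespace Ostrovsky

open Real

/-- `(dslope sinh 0 x)⁻¹` is `x / sinh x`, extended continuously by `1` at `x = 0`. -/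
noncomputable def velocityProfile (x : ℝ) : ℝ :=
  exp (-x) * ((dslope sinh 0 x)⁻¹ + cosh x) / cosh x ^ 2

theorem continuous_velocityProfile : Continuous velocityProfile := by
  have hslope := continuous_dslope_sinh_zero.inv₀ fun x =>
    (one_pos.trans_le (one_le_dslope_sinh_zero x)).ne'
  exact ((continuous_exp.comp continuous_neg).mul (hslope.add continuous_cosh)).div
    (continuous_cosh.pow 2) fun x => pow_ne_zero 2 (cosh_pos x).ne'

theorem velocityProfile_zero : velocityProfile 0 = 2 := by
  norm_num [velocityProfile, dslope_same]

theorem velocityProfile_abs {z : ℝ} (hz : z ≠ 0) :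
    velocityProfile |z| =
      (cosh z / sinh z - Real.sign z) * (z + sinh (2 * z) / 2) / cosh z ^ 2 := by
  have hs : sinh z ≠ 0 := sinh_ne_zero.mpr hz
  rw [velocityProfile, dslope_of_ne _ (abs_ne_zero.mpr hz), slope_def_field, sinh_zero,
    sub_zero, sub_zero, sinh_two_mul]
  rcases hz.lt_or_gt with hneg | hpos
  · rw [abs_of_neg hneg, Real.sign_of_neg hneg, neg_neg, cosh_neg, sinh_neg,
      ← cosh_add_sinh]
    field_simp
    ring
  · rw [abs_of_pos hpos, Real.sign_of_pos hpos, ← cosh_sub_sinh]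
    field_simp

theorem velocityProfile_nonneg (x : ℝ) : 0 ≤ velocityProfile x := by
  have := one_le_dslope_sinh_zero x
  unfold velocityProfile
  positivity

theorem velocityProfile_le (x : ℝ) : velocityProfile x ≤ 2 * exp (-x) := by
  have hc := one_le_cosh x
  have hinv : (dslope sinh 0 x)⁻¹ ≤ 1 := inv_le_one_of_one_le₀ (one_le_dslope_sinh_zero x)
  rw [velocityProfile, mul_div_assoc, mul_comm 2]
  refine mul_le_mul_of_nonneg_left ?_ (exp_pos _).le
  rw [div_le_iff₀ (by positivity)]
  nlinarith

theorem integrableOn_velocityProfile : IntegrableOn velocityProfile (Ioi 0) := by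
  refine Integrable.mono' ((exp_neg_integrableOn_Ioi 0 one_pos).const_mul 2)
    continuous_velocityProfile.aestronglyMeasurable.restrict ?_
  refine (ae_restrict_iff' measurableSet_Ioi).mpr (ae_of_all _ fun x hx => ?_)
  rw [norm_of_nonneg (velocityProfile_nonneg x), neg_one_mul]
  exact velocityProfile_le x

noncomputable def velocityTerm (k : ℕ) (x : ℝ) : ℝ :=
  (2 * k + 2) / (2 * k + 1) * ((tanh x ^ (2 * k) - tanh x ^ (2 * k + 1)) / cosh x ^ 2)

theorem velocityTerm_nonneg (k : ℕ) {x : ℝ} (hx : 0 ≤ x) : 0 ≤ velocityTerm k x := by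
  have h : tanh x ^ (2 * k + 1) ≤ tanh x ^ (2 * k) :=
    pow_le_pow_of_le_one (tanh_nonneg hx) (tanh_lt_one x).le (Nat.le_succ _)
  unfold velocityTerm
  have := sub_nonneg.mpr h
  positivity

theorem integrableOn_velocityTerm (k : ℕ) : IntegrableOn (velocityTerm k) (Ioi 0) := by
  unfold velocityTerm
  simp_rw [sub_div]
  exact ((integrableOn_tanh_pow_div_cosh_sq _).sub
    (integrableOn_tanh_pow_div_cosh_sq _)).const_mul _

theorem integral_velocityTerm (k : ℕ) :
    ∫ x in Ioi 0, velocityTerm k x = 1 / (2 * k + 1) ^ 2 := by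
  unfold velocityTerm
  simp_rw [sub_div]
  rw [integral_const_mul, integral_sub (integrableOn_tanh_pow_div_cosh_sq _)
    (integrableOn_tanh_pow_div_cosh_sq _), integral_tanh_pow_div_cosh_sq,
    integral_tanh_pow_div_cosh_sq]
  push_cast
  field_simp
  ring

theorem hasSum_velocityTerm {x : ℝ} (hx : 0 < x) :
    HasSum (fun k => velocityTerm k x) (velocityProfile x) := by
  have hs : 0 < sinh x := sinh_pos_iff.mpr hx
  have hc : 0 < cosh x := cosh_pos x
  have ht : 0 < tanh x := by rw [tanh_eq_sinh_div_cosh]; positivity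
  have hgeom : HasSum (fun k : ℕ => (tanh x ^ 2) ^ k) (1 - tanh x ^ 2)⁻¹ :=
    hasSum_geometric_of_lt_one (sq_nonneg _) (tanh_sq_lt_one x)
  have hsum := (hgeom.add ((hasSum_tanh_pow_div x).div_const (tanh x))).mul_right
    ((1 - tanh x) / cosh x ^ 2)
  have hval : ((1 - tanh x ^ 2)⁻¹ + x / tanh x) * ((1 - tanh x) / cosh x ^ 2) =
      velocityProfile x := by
    have h1 : 1 - tanh x ^ 2 = 1 / cosh x ^ 2 := by
      rw [tanh_eq_sinh_div_cosh, eq_div_iff (by positivity), sub_mul, div_pow,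
        div_mul_cancel₀ _ (by positivity)]
      linarith [cosh_sq_sub_sinh_sq x]
    rw [h1, velocityProfile, dslope_of_ne _ hx.ne', slope_def_field, sinh_zero, sub_zero,
      sub_zero, tanh_eq_sinh_div_cosh, ← cosh_sub_sinh]
    field_simp
    ring
  rw [hval] at hsum
  refine hsum.congr_fun fun k => ?_
  rw [velocityTerm, pow_succ, pow_mul]
  field_simp
  ring

theorem integral_velocityProfile_Ioi : ∫ x in Ioi 0, velocityProfile x = π ^ 2 / 8 := by
  have hnorm (k : ℕ) : ∫ x in Ioi 0, ‖velocityTerm k x‖ = 1 / (2 * k + 1) ^ 2 := by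
    rw [← integral_velocityTerm k]
    exact setIntegral_congr_fun measurableSet_Ioi fun x hx =>
      norm_of_nonneg (velocityTerm_nonneg k (le_of_lt hx))
  have hsum := hasSum_integral_of_summable_integral_norm integrableOn_velocityTerm
    (by simpa only [hnorm] using hasSum_one_div_odd_sq.summable)
  simp_rw [integral_velocityTerm] at hsum
  rw [hasSum_one_div_odd_sq.unique hsum]
  exact setIntegral_congr_fun measurableSet_Ioi fun x hx =>
    (hasSum_velocityTerm hx).tsum_eq.symm

end Ostrovsky

/-- The function `g(z) = (coth z − sgn z)(z + (1/2)sinh(2z)) sech²(z)` for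
`z ≠ 0`, with `g(0) = 2`, is continuous and Lebesgue integrable on `ℝ`, and
`∫_ℝ g = π²/4`. -/
theorem ostrovsky_velocity_integral
    (g : ℝ → ℝ)
    (hg : ∀ z : ℝ, z ≠ 0 →
      g z = (Real.cosh z / Real.sinh z - Real.sign z) * (z + Real.sinh (2 * z) / 2)
        / Real.cosh z ^ 2)
    (hg0 : g 0 = 2) :
    Continuous g ∧ Integrable g volume ∧ ∫ z : ℝ, g z = Real.pi ^ 2 / 4 := by
  have hprofile : g = fun z => Ostrovsky.velocityProfile |z| := by
    ext z
    rcases eq_or_ne z 0 with rfl | hz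
    · rw [hg0, abs_zero, Ostrovsky.velocityProfile_zero]
    · rw [hg z hz, Ostrovsky.velocityProfile_abs hz]
  subst hprofile
  refine ⟨Ostrovsky.continuous_velocityProfile.comp continuous_abs,
    integrable_comp_abs_of_integrableOn_Ioi Ostrovsky.integrableOn_velocityProfile, ?_⟩
  rw [integral_comp_abs, Ostrovsky.integral_velocityProfile_Ioi]
  ring
end

section
/- Let ω > 0 and let u : ℝ × ℝ → ℝ be smooth, with u and all its partial derivatives decaying rapidly in x (faster than any power of 1/|x|) locally uniformly in t. Set q = u − u_{xx} + ω and assume q(x,t) > 0 for all (x,t). If q satisfies q_t + 2qu_x + q_xu = 0 (equivalently, u solves the Camassa–Holm equation u_t − u_{xxt} + 2ωu_x + 3uu_x − 2u_xu_{xx} − uu_{xxx} = 0), then ∂_t√q = −∂_x(u√q) at every point, and the Casimir functional t ↦ ∫_ℝ ( √(q(x,t)/ω) − 1 ) dx is constant. -/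
open MeasureTheory

local notation "∞∞" => ((⊤ : ℕ∞) : WithTop ℕ∞)

/-- parametric deriv in the first coordinate is smooth -/
lemma smooth_pderiv1 {v : ℝ × ℝ → ℝ} (hv : ContDiff ℝ ∞∞ v) :
    ContDiff ℝ ∞∞ (fun p : ℝ × ℝ => deriv (fun x' => v (x', p.2)) p.1) := by
  have heq : (fun p : ℝ × ℝ => deriv (fun x' => v (x', p.2)) p.1)
      = (fun p : ℝ × ℝ => fderiv ℝ (fun x' => v (x', p.2)) p.1 (1 : ℝ)) :=
    funext fun p => (fderiv_apply_one_eq_deriv).symm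
  rw [heq]
  apply ContDiff.fderiv_apply (f := fun (p : ℝ × ℝ) (x' : ℝ) => v (x', p.2))
    (g := fun p => p.1) (k := fun _ => (1:ℝ))
  · exact hv.comp (contDiff_snd.prodMk (contDiff_snd.comp contDiff_fst))
  · exact contDiff_fst
  · exact contDiff_const
  · simp

lemma abs_sqrt_sub_one_le {a : ℝ} (ha : 0 ≤ a) : |Real.sqrt a - 1| ≤ |a - 1| := by
  have hs := Real.sqrt_nonneg a
  have h1 : (Real.sqrt a - 1) * (Real.sqrt a + 1) = a - 1 := by
    have := Real.sq_sqrt ha; nlinarith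
  calc |Real.sqrt a - 1| ≤ |Real.sqrt a - 1| * (Real.sqrt a + 1) :=
        le_mul_of_one_le_right (abs_nonneg _) (by linarith)
    _ = |(Real.sqrt a - 1) * (Real.sqrt a + 1)| := by
        rw [abs_mul, abs_of_nonneg (by linarith : (0:ℝ) ≤ Real.sqrt a + 1)]
    _ = |a - 1| := by rw [h1]

lemma tendsto_inv_one_add_sq_atTop :
    Filter.Tendsto (fun x : ℝ => (1 + x ^ 2)⁻¹) Filter.atTop (nhds 0) := by
  apply Filter.Tendsto.inv_tendsto_atTop
  exact Filter.tendsto_atTop_add_const_left _ 1 (Filter.tendsto_pow_atTop two_ne_zero)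

lemma tendsto_inv_one_add_sq_atBot :
    Filter.Tendsto (fun x : ℝ => (1 + x ^ 2)⁻¹) Filter.atBot (nhds 0) := by
  apply Filter.Tendsto.inv_tendsto_atTop
  apply Filter.tendsto_atTop_add_const_left _ 1
  have h := (Filter.tendsto_pow_atTop (n := 2) two_ne_zero).comp
    (Filter.tendsto_neg_atBot_atTop :
      Filter.Tendsto (fun x : ℝ => -x) Filter.atBot Filter.atTop)
  refine h.congr ?_
  intro x; simp [Function.comp, neg_pow]

set_option maxHeartbeats 1000000 in
/-- Let `ω > 0`, `u` smooth and rapidly decaying, `q = u − u_{xx} + ω > 0`.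
If `q_t + 2qu_x + q_xu = 0` (i.e. `u` solves Camassa–Holm), then `∂_t√q = −∂_x(u√q)`
everywhere, and the Casimir `t ↦ ∫_ℝ (√(q/ω) − 1) dx` is constant. -/
theorem camassa_holm_casimir (ω : ℝ) (hω : 0 < ω) (u q : ℝ → ℝ → ℝ)
    (husmooth : ContDiff ℝ (⊤ : ℕ∞) (Function.uncurry u))
    (hudecay : RapidlyDecayingInX u)
    (hq : ∀ x t : ℝ, q x t = u x t - deriv (deriv (fun x' => u x' t)) x + ω)
    (hqpos : ∀ x t : ℝ, 0 < q x t)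
    (hCH : ∀ x t : ℝ,
      deriv (fun t' => q x t') t
        + 2 * q x t * deriv (fun x' => u x' t) x
        + deriv (fun x' => q x' t) x * u x t = 0) :
    (∀ x t : ℝ,
      deriv (fun t' => Real.sqrt (q x t')) t
        = -deriv (fun x' => u x' t * Real.sqrt (q x' t)) x) ∧
    (∀ t₁ t₂ : ℝ,
      ∫ x : ℝ, (Real.sqrt (q x t₁ / ω) - 1) = ∫ x : ℝ, (Real.sqrt (q x t₂ / ω) - 1)) := by
  have hωs : 0 < Real.sqrt ω := Real.sqrt_pos.mpr hω
  -- smooth two-variable functions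
  have hU : ContDiff ℝ ∞∞ (fun p : ℝ × ℝ => u p.1 p.2) := husmooth.of_le (by simp)
  set U1 : ℝ × ℝ → ℝ := fun p => deriv (fun x' => u x' p.2) p.1 with hU1def
  have hU1 : ContDiff ℝ ∞∞ U1 := smooth_pderiv1 hU
  set U2 : ℝ × ℝ → ℝ := fun p => deriv (fun x' => U1 (x', p.2)) p.1 with hU2def
  have hU2 : ContDiff ℝ ∞∞ U2 := smooth_pderiv1 hU1
  set U3 : ℝ × ℝ → ℝ := fun p => deriv (fun x' => U2 (x', p.2)) p.1 with hU3def
  have hU3 : ContDiff ℝ ∞∞ U3 := smooth_pderiv1 hU2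
  have hU2eq : ∀ x t : ℝ, U2 (x, t) = deriv (deriv (fun x' => u x' t)) x := fun x t => rfl
  have hQfun : (fun p : ℝ × ℝ => q p.1 p.2) = fun p : ℝ × ℝ => u p.1 p.2 - U2 p + ω := by
    funext p
    rw [hq p.1 p.2, hU2eq p.1 p.2]
  have hQ : ContDiff ℝ ∞∞ (fun p : ℝ × ℝ => q p.1 p.2) := by
    rw [hQfun]; exact (hU.sub hU2).add contDiff_const
  -- pointwise differentiability facts
  have hqt : ∀ x t : ℝ, HasDerivAt (fun t' => q x t') (deriv (fun t' => q x t') t) t := by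
    intro x t
    have h1 : ContDiff ℝ ∞∞ (fun t' : ℝ => q x t') :=
      hQ.comp (contDiff_const.prodMk contDiff_id)
    exact ((h1.differentiable (by simp)).differentiableAt).hasDerivAt
  have hux : ∀ x t : ℝ, HasDerivAt (fun x' => u x' t) (U1 (x, t)) x := by
    intro x t
    have h1 : ContDiff ℝ ∞∞ (fun x' : ℝ => u x' t) :=
      hU.comp (contDiff_id.prodMk contDiff_const)
    exact ((h1.differentiable (by simp)).differentiableAt).hasDerivAt
  have hU2x : ∀ x t : ℝ, HasDerivAt (fun x' => U2 (x', t)) (U3 (x, t)) x := by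
    intro x t
    have h1 : ContDiff ℝ ∞∞ (fun x' : ℝ => U2 (x', t)) :=
      hU2.comp (contDiff_id.prodMk contDiff_const)
    exact ((h1.differentiable (by simp)).differentiableAt).hasDerivAt
  have hqxf : ∀ t : ℝ, (fun x' : ℝ => q x' t) = fun x' => u x' t - U2 (x', t) + ω := by
    intro t; funext x'; rw [hq x' t, hU2eq x' t]
  have hqx : ∀ x t : ℝ, HasDerivAt (fun x' => q x' t) (U1 (x, t) - U3 (x, t)) x := by
    intro x t
    rw [hqxf t]
    exact ((hux x t).sub (hU2x x t)).add_const ω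
  have hqxval : ∀ x t : ℝ, deriv (fun x' => q x' t) x = U1 (x, t) - U3 (x, t) :=
    fun x t => (hqx x t).deriv
  -- the time derivative of q from the CH equation
  have hqtval : ∀ x t : ℝ, deriv (fun t' => q x t') t
      = -(2 * q x t * U1 (x, t)) - (U1 (x, t) - U3 (x, t)) * u x t := by
    intro x t
    have hch := hCH x t
    have h1 : deriv (fun x' => u x' t) x = U1 (x, t) := rfl
    rw [h1, hqxval x t] at hch
    linarith
  -- key time-derivative of sqrt q
  have hsqt : ∀ x t : ℝ, HasDerivAt (fun t' => Real.sqrt (q x t'))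
      (-(U1 (x, t) * Real.sqrt (q x t)
        + u x t * ((U1 (x, t) - U3 (x, t)) / (2 * Real.sqrt (q x t))))) t := by
    intro x t
    have h0 := ((hqt x t).sqrt (ne_of_gt (hqpos x t)))
    have hs : (0:ℝ) < Real.sqrt (q x t) := Real.sqrt_pos.mpr (hqpos x t)
    have hqs : Real.sqrt (q x t) ^ 2 = q x t := Real.sq_sqrt (hqpos x t).le
    have hval : deriv (fun t' => q x t') t / (2 * Real.sqrt (q x t))
        = -(U1 (x, t) * Real.sqrt (q x t)
          + u x t * ((U1 (x, t) - U3 (x, t)) / (2 * Real.sqrt (q x t)))) := by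
      rw [hqtval x t, ← hqs]
      field_simp
      rw [Real.sqrt_sq hs.le]
      ring
    rw [hval] at h0
    exact h0
  have hprod : ∀ x t : ℝ, HasDerivAt (fun x' => u x' t * Real.sqrt (q x' t))
      (U1 (x, t) * Real.sqrt (q x t)
        + u x t * ((U1 (x, t) - U3 (x, t)) / (2 * Real.sqrt (q x t)))) x := by
    intro x t
    have h1 := (hux x t).mul ((hqx x t).sqrt (ne_of_gt (hqpos x t)))
    exact h1
  constructor
  · intro x t
    rw [(hsqt x t).deriv, (hprod x t).deriv]
  -- Part 2 : the Casimir is constant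
  -- decay estimates
  have hdecay2 : ∀ i : ℕ, ∀ a b : ℝ, ∃ C : ℝ, 0 ≤ C ∧ ∀ t ∈ Set.Icc a b, ∀ x : ℝ,
      (1 + x ^ 2) * |iteratedDeriv i (fun x' => u x' t) x| ≤ C := by
    intro i a b
    obtain ⟨C0, h0⟩ := hudecay i 0 0 a b
    obtain ⟨C2, h2⟩ := hudecay i 0 2 a b
    simp only [iteratedDeriv_zero] at h0 h2
    refine ⟨|C0| + |C2|, by positivity, ?_⟩
    intro t ht x
    have a0 := h0 t ht x
    have a2 := h2 t ht x
    have e : (1 + x ^ 2) * |iteratedDeriv i (fun x' => u x' t) x|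
        = |x| ^ 0 * |iteratedDeriv i (fun x' => u x' t) x|
          + |x| ^ 2 * |iteratedDeriv i (fun x' => u x' t) x| := by
      rw [pow_zero, sq_abs]; ring
    rw [e]
    linarith [le_abs_self C0, le_abs_self C2]
  have hiter2 : ∀ t : ℝ, ∀ x : ℝ,
      iteratedDeriv 2 (fun x' => u x' t) x = U2 (x, t) := by
    intro t x
    rw [show (2:ℕ) = 1 + 1 from rfl, iteratedDeriv_succ, iteratedDeriv_one]
  have hiter3 : ∀ t : ℝ, ∀ x : ℝ,
      iteratedDeriv 3 (fun x' => u x' t) x = U3 (x, t) := by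
    intro t x
    rw [show (3:ℕ) = 2 + 1 from rfl, iteratedDeriv_succ]
    have h2f : iteratedDeriv 2 (fun x' => u x' t) = fun x' => U2 (x', t) := by
      funext y; exact hiter2 t y
    rw [h2f]
  -- continuity in x facts
  have hcontq : ∀ t : ℝ, Continuous (fun x : ℝ => q x t) := fun t =>
    hQ.continuous.comp (continuous_id.prodMk continuous_const)
  have hcontu : ∀ t : ℝ, Continuous (fun x : ℝ => u x t) := fun t =>
    hU.continuous.comp (continuous_id.prodMk continuous_const)
  have hcontU1 : ∀ t : ℝ, Continuous (fun x : ℝ => U1 (x, t)) := fun t =>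
    hU1.continuous.comp (continuous_id.prodMk continuous_const)
  have hcontU3 : ∀ t : ℝ, Continuous (fun x : ℝ => U3 (x, t)) := fun t =>
    hU3.continuous.comp (continuous_id.prodMk continuous_const)
  -- the main step : derivative of the Casimir integral is 0 at every t₀
  have hMain : ∀ t₀ : ℝ,
      HasDerivAt (fun t => ∫ x : ℝ, (Real.sqrt (q x t / ω) - 1)) 0 t₀ := by
    intro t₀
    set a := t₀ - 1 with ha
    set b := t₀ + 1 with hb
    obtain ⟨A0, hA0n, hA0⟩ := hdecay2 0 a b
    obtain ⟨A1, hA1n, hA1⟩ := hdecay2 1 a b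
    obtain ⟨A2, hA2n, hA2⟩ := hdecay2 2 a b
    obtain ⟨A3, hA3n, hA3⟩ := hdecay2 3 a b
    simp only [iteratedDeriv_zero] at hA0
    have hA1' : ∀ t ∈ Set.Icc a b, ∀ x : ℝ, (1 + x ^ 2) * |U1 (x, t)| ≤ A1 := by
      intro t ht x
      have := hA1 t ht x
      rwa [iteratedDeriv_one] at this
    have hA2' : ∀ t ∈ Set.Icc a b, ∀ x : ℝ, (1 + x ^ 2) * |U2 (x, t)| ≤ A2 := by
      intro t ht x
      have := hA2 t ht x
      rwa [hiter2 t x] at this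
    have hA3' : ∀ t ∈ Set.Icc a b, ∀ x : ℝ, (1 + x ^ 2) * |U3 (x, t)| ≤ A3 := by
      intro t ht x
      have := hA3 t ht x
      rwa [hiter3 t x] at this
    have hx2pos : ∀ x : ℝ, (0:ℝ) < 1 + x ^ 2 := fun x => by positivity
    have hx2one : ∀ x : ℝ, (1:ℝ) ≤ 1 + x ^ 2 := fun x => by nlinarith [sq_nonneg x]
    have hshrink : ∀ (c B x : ℝ), (1 + x ^ 2) * |c| ≤ B → |c| ≤ B := by
      intro c B x h
      nlinarith [abs_nonneg c, mul_nonneg (sq_nonneg x) (abs_nonneg c)]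
    -- bound on |q - ω|
    set Cq := A0 + A2 with hCqdef
    have hCqn : 0 ≤ Cq := by positivity
    have hqsub : ∀ t ∈ Set.Icc a b, ∀ x : ℝ, (1 + x ^ 2) * |q x t - ω| ≤ Cq := by
      intro t ht x
      have h1 := hA0 t ht x
      have h2 := hA2' t ht x
      have e : q x t - ω = u x t - U2 (x, t) := by rw [hq x t, hU2eq x t]; ring
      rw [e]
      calc (1 + x ^ 2) * |u x t - U2 (x, t)|
          ≤ (1 + x ^ 2) * (|u x t| + |U2 (x, t)|) := by
            apply mul_le_mul_of_nonneg_left (abs_sub _ _) (hx2pos x).le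
        _ = (1 + x ^ 2) * |u x t| + (1 + x ^ 2) * |U2 (x, t)| := by ring
        _ ≤ A0 + A2 := add_le_add h1 h2
    -- upper bound on q
    set M := ω + Cq with hM
    have hMpos : 0 < M := by rw [hM]; positivity
    have hqub : ∀ t ∈ Set.Icc a b, ∀ x : ℝ, q x t ≤ M := by
      intro t ht x
      have h1 := hqsub t ht x
      have h2 : |q x t - ω| ≤ Cq := hshrink _ _ x h1
      have h3 := le_abs_self (q x t - ω)
      rw [hM]; linarith
    -- lower bound on q
    have htIcc : t₀ ∈ Set.Icc a b :=
      Set.mem_Icc.mpr ⟨by rw [ha]; linarith, by rw [hb]; linarith⟩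
    obtain ⟨δ, hδpos, hδ⟩ : ∃ δ : ℝ, 0 < δ ∧ ∀ t ∈ Set.Icc a b, ∀ x : ℝ, δ ≤ q x t := by
      set R := Real.sqrt (2 * Cq / ω) with hR
      have hRn : 0 ≤ R := Real.sqrt_nonneg _
      have hKc : IsCompact ((Set.Icc (-R) R) ×ˢ (Set.Icc a b)) :=
        isCompact_Icc.prod isCompact_Icc
      have hne : ((0:ℝ), t₀) ∈ (Set.Icc (-R) R) ×ˢ (Set.Icc a b) :=
        ⟨⟨neg_nonpos.mpr hRn, hRn⟩, htIcc⟩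
      obtain ⟨p, hpK, hpmin⟩ := hKc.exists_isMinOn ⟨_, hne⟩
        (hQ.continuous.continuousOn)
      refine ⟨min (q p.1 p.2) (ω / 2), lt_min (hqpos p.1 p.2) (by linarith), ?_⟩
      intro t ht x
      by_cases hxR : |x| ≤ R
      · have hmem : ((x, t) : ℝ × ℝ) ∈ (Set.Icc (-R) R) ×ˢ (Set.Icc a b) := by
          refine ⟨?_, ht⟩
          rw [Set.mem_Icc]
          constructor
          · linarith [neg_abs_le x]
          · linarith [le_abs_self x]
        exact le_trans (min_le_left _ _) (hpmin hmem)
      · push_neg at hxR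
        have hx2 : 2 * Cq / ω ≤ x ^ 2 := by
          have h1 : R ^ 2 ≤ |x| ^ 2 := pow_le_pow_left₀ hRn hxR.le 2
          rwa [hR, Real.sq_sqrt (by positivity : (0:ℝ) ≤ 2 * Cq / ω), sq_abs] at h1
        have h2Cq : 2 * Cq ≤ ω * x ^ 2 := by
          rw [div_le_iff₀ hω] at hx2; linarith
        have h1 := hqsub t ht x
        have h3 : ω - q x t ≤ |q x t - ω| := by
          rw [abs_sub_comm]; exact le_abs_self _
        have h4 : ω / 2 ≤ q x t := by
          nlinarith [abs_nonneg (q x t - ω), sq_nonneg x]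
        exact le_trans (min_le_right _ _) h4
    have hsδ : 0 < Real.sqrt δ := Real.sqrt_pos.mpr hδpos
    -- the derivative integrand
    set G : ℝ → ℝ → ℝ := fun t x =>
      U1 (x, t) * Real.sqrt (q x t)
        + u x t * ((U1 (x, t) - U3 (x, t)) / (2 * Real.sqrt (q x t))) with hGdef
    set F' : ℝ → ℝ → ℝ := fun t x => -(G t x / Real.sqrt ω) with hF'def
    -- bound for G on the slab
    set KG := A1 * Real.sqrt M + A0 * ((A1 + A3) / (2 * Real.sqrt δ)) with hKG
    have hGbound : ∀ t ∈ Set.Icc a b, ∀ x : ℝ, |G t x| ≤ KG * (1 + x ^ 2)⁻¹ := by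
      intro t ht x
      have hqp := hqpos x t
      have hs : 0 < Real.sqrt (q x t) := Real.sqrt_pos.mpr hqp
      have hs1 : Real.sqrt δ ≤ Real.sqrt (q x t) := Real.sqrt_le_sqrt (hδ t ht x)
      have hs2 : Real.sqrt (q x t) ≤ Real.sqrt M := Real.sqrt_le_sqrt (hqub t ht x)
      have b0 := hA0 t ht x
      have b1 := hA1' t ht x
      have b3 := hA3' t ht x
      have habs1 : |U1 (x, t)| ≤ A1 := hshrink _ _ x b1
      have habs3 : |U3 (x, t)| ≤ A3 := hshrink _ _ x b3
      have t1 : |G t x| ≤ |U1 (x, t)| * Real.sqrt (q x t)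
          + |u x t| * ((|U1 (x, t)| + |U3 (x, t)|) / (2 * Real.sqrt (q x t))) := by
        calc |G t x| ≤ |U1 (x, t) * Real.sqrt (q x t)|
              + |u x t * ((U1 (x, t) - U3 (x, t)) / (2 * Real.sqrt (q x t)))| := abs_add_le _ _
          _ = |U1 (x, t)| * Real.sqrt (q x t)
              + |u x t| * (|U1 (x, t) - U3 (x, t)| / (2 * Real.sqrt (q x t))) := by
              rw [abs_mul, abs_mul, abs_div, abs_of_nonneg (Real.sqrt_nonneg _),
                abs_of_pos (by positivity : (0:ℝ) < 2 * Real.sqrt (q x t))]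
          _ ≤ _ := by
              gcongr
              exact abs_sub _ _
      have t2 : (|U1 (x, t)| * Real.sqrt (q x t)
          + |u x t| * ((|U1 (x, t)| + |U3 (x, t)|) / (2 * Real.sqrt (q x t))))
            * (1 + x ^ 2) ≤ KG := by
        have e1 : (|U1 (x, t)| * Real.sqrt (q x t)) * (1 + x ^ 2)
            = ((1 + x ^ 2) * |U1 (x, t)|) * Real.sqrt (q x t) := by ring
        have e2 : (|u x t| * ((|U1 (x, t)| + |U3 (x, t)|) / (2 * Real.sqrt (q x t))))
              * (1 + x ^ 2)
            = ((1 + x ^ 2) * |u x t|)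
              * ((|U1 (x, t)| + |U3 (x, t)|) / (2 * Real.sqrt (q x t))) := by ring
        have d1 : ((1 + x ^ 2) * |U1 (x, t)|) * Real.sqrt (q x t)
            ≤ A1 * Real.sqrt M :=
          mul_le_mul b1 hs2 (Real.sqrt_nonneg _) hA1n
        have d2 : ((1 + x ^ 2) * |u x t|)
              * ((|U1 (x, t)| + |U3 (x, t)|) / (2 * Real.sqrt (q x t)))
            ≤ A0 * ((A1 + A3) / (2 * Real.sqrt δ)) := by
          apply mul_le_mul b0
          · apply div_le_div₀ (by positivity) (add_le_add habs1 habs3) (by positivity)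
            linarith
          · positivity
          · exact hA0n
        calc (|U1 (x, t)| * Real.sqrt (q x t)
            + |u x t| * ((|U1 (x, t)| + |U3 (x, t)|) / (2 * Real.sqrt (q x t))))
              * (1 + x ^ 2)
            = (|U1 (x, t)| * Real.sqrt (q x t)) * (1 + x ^ 2)
              + (|u x t| * ((|U1 (x, t)| + |U3 (x, t)|) / (2 * Real.sqrt (q x t))))
                * (1 + x ^ 2) := by ring
          _ ≤ A1 * Real.sqrt M + A0 * ((A1 + A3) / (2 * Real.sqrt δ)) := by
              rw [e1, e2]; exact add_le_add d1 d2
          _ = KG := rfl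
      have t3 : |U1 (x, t)| * Real.sqrt (q x t)
          + |u x t| * ((|U1 (x, t)| + |U3 (x, t)|) / (2 * Real.sqrt (q x t)))
          ≤ KG * (1 + x ^ 2)⁻¹ := by
        rw [← div_eq_mul_inv]
        exact (le_div_iff₀ (hx2pos x)).mpr t2
      exact t1.trans t3
    have hKGn : 0 ≤ KG := le_trans (abs_nonneg _) (by
      have := hGbound t₀ htIcc 0
      calc |G t₀ 0| ≤ KG * (1 + (0:ℝ) ^ 2)⁻¹ := this
        _ = KG := by norm_num)
    -- G t is continuous
    have hGcont : ∀ t : ℝ, Continuous (G t) := by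
      intro t
      apply Continuous.add
      · exact (hcontU1 t).mul (Real.continuous_sqrt.comp (hcontq t))
      · apply (hcontu t).mul
        apply Continuous.div ((hcontU1 t).sub (hcontU3 t))
          (continuous_const.mul (Real.continuous_sqrt.comp (hcontq t)))
        intro x
        have : 0 < Real.sqrt (q x t) := Real.sqrt_pos.mpr (hqpos x t)
        exact (mul_pos two_pos this).ne'
    -- integrand is continuous in x
    have hFcont : ∀ t : ℝ, Continuous (fun x : ℝ => Real.sqrt (q x t / ω) - 1) := by
      intro t
      exact (Real.continuous_sqrt.comp ((hcontq t).div_const ω)).sub continuous_const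
    -- integrability of the integrand
    have hFint : ∀ t ∈ Set.Icc a b, Integrable (fun x : ℝ => Real.sqrt (q x t / ω) - 1) := by
      intro t ht
      apply Integrable.mono (integrable_inv_one_add_sq.const_mul (Cq / ω))
        (hFcont t).aestronglyMeasurable
      apply Filter.Eventually.of_forall
      intro x
      have hq0 : 0 ≤ q x t / ω := div_nonneg (hqpos x t).le hω.le
      have h1 : |Real.sqrt (q x t / ω) - 1| ≤ |q x t / ω - 1| := abs_sqrt_sub_one_le hq0
      have h2 : |q x t / ω - 1| = |q x t - ω| / ω := by
        rw [show q x t / ω - 1 = (q x t - ω) / ω by field_simp, abs_div, abs_of_pos hω]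
      have h3 : |q x t - ω| ≤ Cq * (1 + x ^ 2)⁻¹ := by
        rw [← div_eq_mul_inv]
        exact (le_div_iff₀ (hx2pos x)).mpr (by linarith [hqsub t ht x] )
      have h4 : ‖(fun x : ℝ => Real.sqrt (q x t / ω) - 1) x‖ ≤ Cq / ω * (1 + x ^ 2)⁻¹ := by
        simp only [Real.norm_eq_abs]
        calc |Real.sqrt (q x t / ω) - 1| ≤ |q x t - ω| / ω := by rw [← h2]; exact h1
          _ ≤ (Cq * (1 + x ^ 2)⁻¹) / ω := by gcongr
          _ = Cq / ω * (1 + x ^ 2)⁻¹ := by ring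
      calc ‖(fun x : ℝ => Real.sqrt (q x t / ω) - 1) x‖
          ≤ Cq / ω * (1 + x ^ 2)⁻¹ := h4
        _ ≤ ‖Cq / ω * (1 + x ^ 2)⁻¹‖ := le_abs_self _
    -- time-differentiability of the integrand, with derivative F'
    have hdiff : ∀ x : ℝ, ∀ t : ℝ,
        HasDerivAt (fun t' => Real.sqrt (q x t' / ω) - 1) (F' t x) t := by
      intro x t
      have hfeq : (fun t' => Real.sqrt (q x t' / ω) - 1)
          = fun t' => Real.sqrt (q x t') / Real.sqrt ω - 1 := by
        funext t'
        rw [Real.sqrt_div (hqpos x t').le]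
      rw [hfeq]
      have h1 := ((hsqt x t).div_const (Real.sqrt ω)).sub_const 1
      have h2 : -(G t x) / Real.sqrt ω = F' t x := by
        rw [hF'def]; rw [neg_div]
      rw [← h2]
      convert h1 using 1
    -- apply differentiation under the integral sign
    have hball : Metric.ball t₀ 1 ⊆ Set.Icc a b := by
      intro t htb
      rw [Real.ball_eq_Ioo] at htb
      exact ⟨le_of_lt htb.1, le_of_lt htb.2⟩
    have hder : HasDerivAt (fun t => ∫ x : ℝ, (Real.sqrt (q x t / ω) - 1))
        (∫ x : ℝ, F' t₀ x) t₀ := by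
      have H := hasDerivAt_integral_of_dominated_loc_of_deriv_le
        (F := fun t x => Real.sqrt (q x t / ω) - 1) (F' := F')
        (x₀ := t₀) (bound := fun x => (KG / Real.sqrt ω) * (1 + x ^ 2)⁻¹)
        (s := Metric.ball t₀ 1) (Metric.ball_mem_nhds t₀ one_pos)
        (Filter.Eventually.of_forall fun t => (hFcont t).aestronglyMeasurable)
        (hFint t₀ htIcc)
        (((hGcont t₀).div_const _).neg.aestronglyMeasurable)
        ?_ ((integrable_inv_one_add_sq.const_mul _)) ?_
      · exact H.2
      · apply Filter.Eventually.of_forall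
        intro x t htb
        have ht := hball htb
        have h1 := hGbound t ht x
        simp only [hF'def, Real.norm_eq_abs, abs_neg, abs_div,
          abs_of_pos hωs]
        calc |G t x| / Real.sqrt ω ≤ (KG * (1 + x ^ 2)⁻¹) / Real.sqrt ω := by gcongr
          _ = KG / Real.sqrt ω * (1 + x ^ 2)⁻¹ := by ring
      · apply Filter.Eventually.of_forall
        intro x t _
        exact hdiff x t
    -- the integral of F' t₀ vanishes
    have hzero : ∫ x : ℝ, F' t₀ x = 0 := by
      set g0 : ℝ → ℝ := fun x => u x t₀ * Real.sqrt (q x t₀) with hg0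
      have hgd : ∀ x : ℝ, HasDerivAt g0 (G t₀ x) x := fun x => hprod x t₀
      have hGint : Integrable (G t₀) := by
        apply Integrable.mono (integrable_inv_one_add_sq.const_mul KG)
          (hGcont t₀).aestronglyMeasurable
        apply Filter.Eventually.of_forall
        intro x
        calc ‖G t₀ x‖ = |G t₀ x| := rfl
          _ ≤ KG * (1 + x ^ 2)⁻¹ := hGbound t₀ htIcc x
          _ ≤ ‖KG * (1 + x ^ 2)⁻¹‖ := le_abs_self _
      -- g0 tends to 0 at ±∞
      have hg0bd : ∀ x : ℝ, ‖g0 x‖ ≤ (A0 * Real.sqrt M) * (1 + x ^ 2)⁻¹ := by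
        intro x
        have b0 := hA0 t₀ htIcc x
        have hs2 : Real.sqrt (q x t₀) ≤ Real.sqrt M := Real.sqrt_le_sqrt (hqub t₀ htIcc x)
        have habsu : |u x t₀| ≤ A0 * (1 + x ^ 2)⁻¹ := by
          rw [← div_eq_mul_inv]
          exact (le_div_iff₀ (hx2pos x)).mpr (by linarith)
        calc ‖g0 x‖ = |u x t₀| * |Real.sqrt (q x t₀)| := by
              rw [hg0]; exact abs_mul _ _
          _ = |u x t₀| * Real.sqrt (q x t₀) := by
              rw [abs_of_nonneg (Real.sqrt_nonneg _)]
          _ ≤ (A0 * (1 + x ^ 2)⁻¹) * Real.sqrt M := by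
              apply mul_le_mul habsu hs2 (Real.sqrt_nonneg _) (by positivity)
          _ = (A0 * Real.sqrt M) * (1 + x ^ 2)⁻¹ := by ring
      have htop : Filter.Tendsto g0 Filter.atTop (nhds 0) := by
        apply squeeze_zero_norm hg0bd
        have := tendsto_inv_one_add_sq_atTop.const_mul (A0 * Real.sqrt M)
        simpa using this
      have hbot : Filter.Tendsto g0 Filter.atBot (nhds 0) := by
        apply squeeze_zero_norm hg0bd
        have := tendsto_inv_one_add_sq_atBot.const_mul (A0 * Real.sqrt M)
        simpa using this
      have hIoi : ∫ x in Set.Ioi (0:ℝ), G t₀ x = 0 - g0 0 :=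
        integral_Ioi_of_hasDerivAt_of_tendsto' (fun x _ => hgd x)
          hGint.integrableOn htop
      have hIic : ∫ x in Set.Iic (0:ℝ), G t₀ x = g0 0 - 0 :=
        integral_Iic_of_hasDerivAt_of_tendsto' (fun x _ => hgd x)
          hGint.integrableOn hbot
      have htotal : ∫ x : ℝ, G t₀ x = 0 := by
        rw [← intervalIntegral.integral_Iic_add_Ioi (b := (0:ℝ)) hGint.integrableOn hGint.integrableOn,
          hIic, hIoi]
        ring
      have : (fun x : ℝ => F' t₀ x) = fun x : ℝ => (-(Real.sqrt ω)⁻¹) * G t₀ x := by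
        funext x
        simp only [hF'def]
        rw [div_eq_mul_inv]
        ring
      rw [this, integral_const_mul, htotal, mul_zero]
    rw [hzero] at hder
    exact hder
  intro t₁ t₂
  exact is_const_of_deriv_eq_zero
    (fun t => (hMain t).differentiableAt)
    (fun t => (hMain t).deriv) t₁ t₂
end
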